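/- arXiv:2203.02455 — 8 statements merged into one kernel-verified Lean document; each statement's English description precedes it below -/
import Mathlib

section
/- For every integer k ≥ 2 there exists a natural number N (depending only on k) such that every connected finite simple graph G whose distance matrix has rank equal to k satisfies |V(G)| ≤ N. In particular, up to isomorphism there are only finitely many connected graphs with distance rank k. -/
/-!
Along a shortest path `w₀, …, w_d`, the second differences `D(wⱼ) + D(wⱼ₊₂) - 2 D(wⱼ₊₁)` of the
rows of the distance matrix take the value `2` at `wⱼ₊₁` and vanish at the other inner vertices
`wᵢ₊₁`, so they are `d - 1` independent vectors in the row space: the diameter is at most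
`rank + 1`. On the other hand, the vertices indexing a row basis form a resolving set (the row of
any vertex `u` is a combination of basis rows, and its `u`-entry is `0`), so every vertex is
determined by at most `rank` distances, each at most `rank + 1`, and `|V| ≤ (rank + 2) ^ rank`.
-/

open SimpleGraph

/-- The distance matrix of a finite simple graph, over ℚ: the `(u,v)` entry is the
graph distance between `u` and `v`. -/
noncomputable def distMatrix {V : Type*} [Fintype V] (G : SimpleGraph V) : Matrix V V ℚ :=
  fun u v => (G.dist u v : ℚ)

namespace SimpleGraph.Walk

variable {V : Type*} {G : SimpleGraph V} {u v : V}

theorem dist_getVert_getVert_of_length_eq_dist {p : G.Walk u v} (hp : p.length = G.dist u v)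
    {i j : ℕ} (hij : i ≤ j) (hj : j ≤ p.length) :
    G.dist (p.getVert i) (p.getVert j) = j - i := by
  have h := length_eq_dist_of_subwalk hp <|
    ((p.take j).isSubwalk_drop i).trans (p.isSubwalk_take j)
  simp only [drop_length, take_length, take_getVert] at h
  rwa [min_eq_right hij, min_eq_left hj, eq_comm] at h

theorem intCast_dist_getVert_getVert_of_length_eq_dist {p : G.Walk u v}
    (hp : p.length = G.dist u v) {i j : ℕ} (hi : i ≤ p.length) (hj : j ≤ p.length) :
    (G.dist (p.getVert i) (p.getVert j) : ℤ) = |(i : ℤ) - j| := by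
  rcases le_total i j with hij | hji
  · rw [dist_getVert_getVert_of_length_eq_dist hp hij hj, abs_sub_comm, abs_of_nonneg (by omega)]
    omega
  · rw [dist_comm, dist_getVert_getVert_of_length_eq_dist hp hji hi, abs_of_nonneg (by omega)]
    omega

end SimpleGraph.Walk

theorem Int.abs_sub_one_add_abs_add_one_sub_two_mul_abs (a : ℤ) :
    |a - 1| + |a + 1| - 2 * |a| = if a = 0 then 2 else 0 := by
  split_ifs with h
  · simp [h]
  · rcases lt_or_gt_of_ne h with h | h
    · rw [abs_of_neg h, abs_of_neg (by omega : a - 1 < 0), abs_of_nonpos (by omega : a + 1 ≤ 0)]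
      ring
    · rw [abs_of_pos h, abs_of_nonneg (by omega : 0 ≤ a - 1), abs_of_pos (by omega : 0 < a + 1)]
      ring

theorem linearIndependent_of_apply_eq_ite {ι α K : Type*} [Fintype ι] [DecidableEq ι] [Field K]
    {f : ι → α → K} (x : ι → α) {c : K} (hc : c ≠ 0)
    (hf : ∀ i j, f j (x i) = if j = i then c else 0) : LinearIndependent K f := by
  rw [Fintype.linearIndependent_iff]
  intro a ha i
  have h := congr_fun ha (x i)
  simp only [Finset.sum_apply, Pi.smul_apply, smul_eq_mul, hf, mul_ite, mul_zero,
    Finset.sum_ite_eq', Finset.mem_univ, if_true, Pi.zero_apply] at h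
  exact (mul_eq_zero.mp h).resolve_right hc

theorem Matrix.card_le_rank_of_linearIndependent {m n K ι : Type*} [Fintype m] [Fintype n]
    [Fintype ι] [Field K] (A : Matrix m n K) {f : ι → n → K} (hf : LinearIndependent K f)
    (hA : ∀ i, f i ∈ Submodule.span K (Set.range A)) : Fintype.card ι ≤ A.rank := by
  rw [A.rank_eq_finrank_span_row, ← finrank_span_eq_card hf]
  exact Submodule.finrank_mono (Submodule.span_le.mpr (Set.range_subset_iff.mpr hA))

theorem Matrix.exists_finset_card_le_rank_forall_eq_of_forall_mem_eq {m n K : Type*}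
    [Fintype m] [Fintype n] [Field K] (A : Matrix m n K) :
    ∃ S : Finset m, S.card ≤ A.rank ∧
      ∀ j j', (∀ i ∈ S, A i j = A i j') → ∀ i, A i j = A i j' := by
  classical
  obtain ⟨κ, a, ha, hspan, hli⟩ := exists_linearIndependent' K A
  have : Fintype κ := Fintype.ofInjective a ha
  refine ⟨Finset.univ.map ⟨a, ha⟩, ?_, fun j j' hS i => ?_⟩
  · rw [Finset.card_map, Finset.card_univ, A.rank_eq_finrank_span_row,
      ← finrank_span_eq_card hli, hspan]
    rfl
  · let φ : (n → K) →ₗ[K] K := LinearMap.proj (R := K) (φ := fun _ => K) j - LinearMap.proj j'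
    have hrows : Set.range (A ∘ a) ⊆ LinearMap.ker φ := by
      rintro _ ⟨l, rfl⟩
      exact LinearMap.mem_ker.mpr <| sub_eq_zero.mpr <|
        hS (a l) (Finset.mem_map_of_mem _ (Finset.mem_univ l))
    have hAi : A i ∈ Submodule.span K (Set.range (A ∘ a)) :=
      hspan ▸ Submodule.subset_span ⟨i, rfl⟩
    simpa [φ, sub_eq_zero] using Submodule.span_le.mpr hrows hAi

namespace SimpleGraph

variable {V : Type*} [Fintype V] (G : SimpleGraph V)

theorem dist_le_rank_distMatrix_add_one (u v : V) : G.dist u v ≤ (distMatrix G).rank + 1 := by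
  by_cases huv : G.Reachable u v
  swap
  · simp [dist_eq_zero_of_not_reachable huv]
  obtain ⟨p, hp⟩ := huv.exists_walk_length_eq_dist
  set w : ℕ → V := p.getVert
  let f : Fin (p.length - 1) → V → ℚ := fun j =>
    distMatrix G (w j) + distMatrix G (w (j + 2)) - (2 : ℚ) • distMatrix G (w (j + 1))
  have hdist (s t : ℕ) (hs : s ≤ p.length) (ht : t ≤ p.length) :
      (G.dist (w s) (w t) : ℚ) = |(s : ℤ) - t| := by
    rw [← Walk.intCast_dist_getVert_getVert_of_length_eq_dist hp hs ht]; rfl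
  have hf (i j : Fin (p.length - 1)) : f j (w (i + 1)) = if j = i then 2 else 0 := by
    have key := Int.abs_sub_one_add_abs_add_one_sub_two_mul_abs ((j : ℤ) - i)
    have hcond : j = i ↔ (j : ℤ) - i = 0 := by omega
    simp only [f, distMatrix, Pi.add_apply, Pi.sub_apply, Pi.smul_apply, smul_eq_mul, hcond]
    rw [hdist _ _ (by omega) (by omega), hdist _ _ (by omega) (by omega),
      hdist _ _ (by omega) (by omega)]
    convert congrArg (Int.cast : ℤ → ℚ) key using 1 <;> push_cast <;> ring_nf
  have hmem (j : Fin (p.length - 1)) : f j ∈ Submodule.span ℚ (Set.range (distMatrix G)) := by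
    have (t : ℕ) : distMatrix G (w t) ∈ Submodule.span ℚ (Set.range (distMatrix G)) :=
      Submodule.subset_span ⟨_, rfl⟩
    exact Submodule.sub_mem _ (Submodule.add_mem _ (this _) (this _))
      (Submodule.smul_mem _ _ (this _))
  have := (distMatrix G).card_le_rank_of_linearIndependent
    (linearIndependent_of_apply_eq_ite (fun i : Fin _ => w (i + 1)) two_ne_zero hf) hmem
  rw [Fintype.card_fin] at this
  omega

def IsResolvingSet (S : Finset V) : Prop :=
  ∀ u u', (∀ s ∈ S, G.dist u s = G.dist u' s) → u = u'

theorem Connected.exists_isResolvingSet_card_le_rank_distMatrix (hG : G.Connected) :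
    ∃ S : Finset V, G.IsResolvingSet S ∧ S.card ≤ (distMatrix G).rank := by
  obtain ⟨S, hcard, hS⟩ := (distMatrix G).exists_finset_card_le_rank_forall_eq_of_forall_mem_eq
  refine ⟨S, fun u u' h => ?_, hcard⟩
  have := hS u u' (fun s hs => by simp [distMatrix, dist_comm, h s hs]) u
  simp only [distMatrix, dist_self, Nat.cast_zero] at this
  exact hG.dist_eq_zero_iff.mp (by exact_mod_cast this.symm)

variable {G} in
theorem IsResolvingSet.card_le_pow {S : Finset V} (hS : G.IsResolvingSet S) {D : ℕ}
    (hD : ∀ u v, G.dist u v ≤ D) : Fintype.card V ≤ (D + 1) ^ S.card := by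
  classical
  let coords : V → S → Fin (D + 1) := fun u s => ⟨G.dist u s, Nat.lt_succ_of_le (hD u s)⟩
  have hinj : coords.Injective := fun u u' h =>
    hS u u' fun s hs => congrArg Fin.val (congrFun h ⟨s, hs⟩)
  simpa using Fintype.card_le_of_injective coords hinj

end SimpleGraph

theorem finitely_many_graphs_of_distRank_general (k : ℕ) :
    ∃ N : ℕ, ∀ (V : Type) [Fintype V] (G : SimpleGraph V),
      G.Connected → (distMatrix G).rank = k → Fintype.card V ≤ N := by
  refine ⟨(k + 2) ^ k, fun V _ G hG hrank => ?_⟩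
  obtain ⟨S, hS, hcard⟩ := hG.exists_isResolvingSet_card_le_rank_distMatrix
  calc Fintype.card V ≤ (k + 2) ^ S.card :=
        hS.card_le_pow fun u v => hrank ▸ G.dist_le_rank_distMatrix_add_one u v
    _ ≤ (k + 2) ^ k := Nat.pow_le_pow_right (by omega) (hrank ▸ hcard)

/-- For every integer k ≥ 2 there is a natural number N (depending only on k) such that every
connected finite simple graph whose distance matrix has rank k has at most N vertices. -/
theorem finitely_many_graphs_of_distRank (k : ℕ) (hk : 2 ≤ k) :
    ∃ N : ℕ, ∀ (V : Type) [Fintype V] (G : SimpleGraph V),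
      G.Connected → (distMatrix G).rank = k → Fintype.card V ≤ N :=
  finitely_many_graphs_of_distRank_general k
end

section
/- If G is a connected finite simple graph whose distance matrix has rank 3, then G is a cograph, i.e., G contains no induced subgraph isomorphic to the path P_4 on four vertices. -/
/-! An induced `P₄` on `v₀ v₁ v₂ v₃` fixes every distance among its vertices except
`d(v₀, v₃) ∈ {2, 3}`. The corresponding principal `4 × 4` submatrix of `D(G)` has determinant
`(d(v₀, v₃) - 1) (d(v₀, v₃) - 9) ≠ 0`, so `rank D(G) ≥ 4`. -/

open SimpleGraph

theorem Matrix.card_le_rank_of_isUnit_submatrix {m n ι R : Type*} [Fintype n] [Fintype ι]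
    [DecidableEq ι] [CommSemiring R] [StrongRankCondition R] (A : Matrix m n R) (r : ι → m)
    (c : ι → n) (h : IsUnit (A.submatrix r c)) : Fintype.card ι ≤ A.rank :=
  (Matrix.rank_of_isUnit _ h).symm.trans_le (A.rank_submatrix_le r c)

theorem Matrix.det_pathGraph_four_distPattern {R : Type*} [CommRing R] (x : R) :
    !![0, 1, 2, x; 1, 0, 1, 2; 2, 1, 0, 1; x, 2, 1, 0].det = (x - 1) * (x - 9) := by
  simp [Matrix.det_succ_row_zero, Fin.sum_univ_succ, Fin.succAbove]
  ring

namespace SimpleGraph.Embedding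

variable {V : Type*} {G : SimpleGraph V} {n : ℕ} (f : pathGraph n ↪g G)

theorem adj_pathGraph_iff (i j : Fin n) :
    G.Adj (f i) (f j) ↔ i.val + 1 = j.val ∨ j.val + 1 = i.val := by
  rw [f.map_adj_iff, pathGraph_adj]

theorem dist_pathGraph_of_succ {i j : Fin n} (h : i.val + 1 = j.val) : G.dist (f i) (f j) = 1 :=
  dist_eq_one_iff_adj.mpr ((f.adj_pathGraph_iff i j).mpr (.inl h))

theorem dist_pathGraph_le_of_succ (i : Fin n) {j k : Fin n} (h : j.val + 1 = k.val) :
    G.dist (f i) (f k) ≤ G.dist (f i) (f j) + 1 :=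
  f.dist_pathGraph_of_succ h ▸
    ((f.adj_pathGraph_iff j k).mpr (.inl h)).reachable.dist_triangle_right _

theorem two_le_dist_pathGraph {i j : Fin n} (h : i.val + 2 ≤ j.val) : 2 ≤ G.dist (f i) (f j) :=
  ((pathGraph_preconnected n i j).map f.toHom).one_lt_dist_of_ne_of_not_adj
    (f.injective.ne (Fin.ne_of_lt (by omega))) ((f.adj_pathGraph_iff i j).not.mpr (by omega))

theorem dist_pathGraph_of_two_apart {i j k : Fin n} (hij : i.val + 1 = j.val)
    (hjk : j.val + 1 = k.val) : G.dist (f i) (f k) = 2 :=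
  le_antisymm
    ((f.dist_pathGraph_le_of_succ i hjk).trans_eq (by rw [f.dist_pathGraph_of_succ hij]))
    (f.two_le_dist_pathGraph (by omega))

end SimpleGraph.Embedding

theorem distMatrix_submatrix_pathGraph_four {V : Type*} [Fintype V] {G : SimpleGraph V}
    (f : pathGraph 4 ↪g G) :
    (distMatrix G).submatrix f f =
      !![0, 1, 2, (G.dist (f 0) (f 3) : ℚ);
         1, 0, 1, 2;
         2, 1, 0, 1;
         (G.dist (f 0) (f 3) : ℚ), 2, 1, 0] := by
  have d01 : G.dist (f 0) (f 1) = 1 := f.dist_pathGraph_of_succ rfl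
  have d12 : G.dist (f 1) (f 2) = 1 := f.dist_pathGraph_of_succ rfl
  have d23 : G.dist (f 2) (f 3) = 1 := f.dist_pathGraph_of_succ rfl
  have d02 : G.dist (f 0) (f 2) = 2 := f.dist_pathGraph_of_two_apart (j := 1) rfl rfl
  have d13 : G.dist (f 1) (f 3) = 2 := f.dist_pathGraph_of_two_apart (j := 2) rfl rfl
  ext i j
  fin_cases i <;> fin_cases j <;>
    simp [distMatrix, dist_comm (u := f 3), dist_comm (v := f 0), dist_comm (u := f 2) (v := f 1),
      d01, d12, d23, d02, d13]

theorem cograph_of_distRank_eq_three_general {V : Type*} [Fintype V] (G : SimpleGraph V)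
    (hr : (distMatrix G).rank = 3) :
    ¬ Nonempty (pathGraph 4 ↪g G) := by
  rintro ⟨f⟩
  have hlo : (2 : ℚ) ≤ G.dist (f 0) (f 3) := by
    exact_mod_cast f.two_le_dist_pathGraph (by decide)
  have hhi : (G.dist (f 0) (f 3) : ℚ) ≤ 3 := by
    have h := f.dist_pathGraph_le_of_succ 0 (j := 2) (k := 3) rfl
    rw [f.dist_pathGraph_of_two_apart (j := 1) (k := 2) rfl rfl] at h
    exact_mod_cast h
  have hdet : ((distMatrix G).submatrix f f).det ≠ 0 := by
    rw [distMatrix_submatrix_pathGraph_four, Matrix.det_pathGraph_four_distPattern]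
    exact mul_ne_zero (by linarith) (by linarith)
  have h4 := (distMatrix G).card_le_rank_of_isUnit_submatrix f f
    ((Matrix.isUnit_iff_isUnit_det _).mpr hdet.isUnit)
  rw [Fintype.card_fin, hr] at h4
  omega

/-- If G is a connected finite simple graph whose distance matrix has rank 3, then G is a
cograph, i.e. G has no induced subgraph isomorphic to the path P₄ on four vertices. -/
theorem cograph_of_distRank_eq_three {V : Type*} [Fintype V] (G : SimpleGraph V)
    (hG : G.Connected) (hr : (distMatrix G).rank = 3) :
    ¬ Nonempty (pathGraph 4 ↪g G) :=
  cograph_of_distRank_eq_three_general G hr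
end

section
/- If G is a connected finite simple graph whose distance matrix has rank 3, then G is isomorphic to one of the following three graphs: the complete graph K_3, the path P_3 on three vertices, or the cycle C_4 on four vertices. -/
/-!
If two vertices were at distance at least 3, the first four vertices of a geodesic between them
would span the distance matrix of `P₄`, of determinant `-12`, forcing rank at least 4. So `G` has
diameter at most 2, and the principal submatrix of `D(G)` on any four vertices is `2(J - I) - A`
for the induced subgraph. Among the 64 graphs on four vertices this matrix is singular only for
`C₄`, so any four vertices induce a `C₄`. Then there are at most four vertices: with five, the
first would be adjacent to exactly two of any three of the other four, so three times its number
of neighbours among them would be 8. Since the rank is at most the number of vertices there are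
at least three, and the connected graphs on three vertices are `K₃` and `P₃`.
-/

open SimpleGraph

open Matrix

namespace Matrix

variable {R : Type*} [CommRing R]

theorem le_rank_of_det_submatrix_ne_zero {m ι K : Type*} [Fintype m] [Fintype ι] [DecidableEq ι]
    [Field K] (A : Matrix m m K) (f : ι → m) (h : (A.submatrix f f).det ≠ 0) :
    Fintype.card ι ≤ A.rank := by
  rw [← rank_of_isUnit _ ((isUnit_iff_isUnit_det _).2 h.isUnit)]
  exact rank_submatrix_le A f f

def det3 (A : Matrix (Fin 3) (Fin 3) R) : R :=
  A 0 0 * A 1 1 * A 2 2 - A 0 0 * A 1 2 * A 2 1 - A 0 1 * A 1 0 * A 2 2 +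
    A 0 1 * A 1 2 * A 2 0 + A 0 2 * A 1 0 * A 2 1 - A 0 2 * A 1 1 * A 2 0

/-- Cofactor expansion of the determinant that the kernel can evaluate, so that `decide` can
run over all graphs on four vertices. -/
def det4 (A : Matrix (Fin 4) (Fin 4) R) : R :=
  ∑ j : Fin 4, (-1) ^ (j : ℕ) * A 0 j * det3 (A.submatrix Fin.succ j.succAbove)

theorem det_eq_det4 (A : Matrix (Fin 4) (Fin 4) R) : A.det = det4 A := by
  simp [det_succ_row_zero A, det_fin_three, det4, det3]

end Matrix

namespace SimpleGraph

variable {V : Type*} {G : SimpleGraph V}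

theorem degree_comap_eq_sum {W : Type*} [Fintype W] [DecidableRel G.Adj] (f : W → V) (w : W) :
    (G.comap f).degree w = ∑ x, if G.Adj (f w) (f x) then 1 else 0 := by
  rw [← card_neighborFinset_eq_degree, neighborFinset_eq_filter, Finset.card_filter]
  rfl

theorem Walk.dist_getVert_le {u v : V} (p : G.Walk u v) {i j : ℕ} (hij : i ≤ j) :
    G.dist (p.getVert i) (p.getVert j) ≤ j - i := by
  induction j, hij using Nat.le_induction with
  | base => simp
  | succ j hij ih =>
    have hstep : G.Reachable (p.getVert j) (p.getVert (j + 1)) ∧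
        G.dist (p.getVert j) (p.getVert (j + 1)) ≤ 1 := by
      rcases lt_or_ge j p.length with hj | hj
      · have hadj := p.adj_getVert_succ hj
        exact ⟨hadj.reachable, (dist_eq_one_iff_adj.2 hadj).le⟩
      · rw [p.getVert_of_length_le hj, p.getVert_of_length_le (hj.trans j.le_succ)]
        simp
    have := hstep.1.dist_triangle_right (p.getVert i)
    omega

theorem Walk.dist_getVert_eq_of_length_eq_dist {u v : V} (p : G.Walk u v)
    (hp : p.length = G.dist u v) {i j : ℕ} (hij : i ≤ j) (hj : j ≤ p.length) :
    G.dist (p.getVert i) (p.getVert j) = j - i := by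
  classical
  refine le_antisymm (p.dist_getVert_le hij) ?_
  have hu : G.Reachable u (p.getVert i) := ⟨p.takeUntil _ (p.getVert_mem_support i)⟩
  have hv : G.Reachable (p.getVert j) v := ⟨p.dropUntil _ (p.getVert_mem_support j)⟩
  have h1 := p.dist_getVert_le (Nat.zero_le i)
  have h2 := p.dist_getVert_le hj
  rw [p.getVert_zero] at h1
  rw [p.getVert_length] at h2
  have := hu.dist_triangle_left v
  have := hv.dist_triangle_right (p.getVert i)
  omega

section DiamTwo

variable [DecidableEq V]

def diamTwoDistMatrix (G : SimpleGraph V) [DecidableRel G.Adj] : Matrix V V ℤ :=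
  of fun u v => if u = v then 0 else if G.Adj u v then 1 else 2

theorem diamTwoDistMatrix_submatrix {W : Type*} [DecidableEq W] [DecidableRel G.Adj]
    {f : W → V} (hf : Function.Injective f) :
    G.diamTwoDistMatrix.submatrix f f = (G.comap f).diamTwoDistMatrix := by
  ext
  simp [diamTwoDistMatrix, hf.eq_iff]

theorem distMatrix_eq_map_diamTwoDistMatrix [Fintype V] [DecidableRel G.Adj] (hG : G.Connected)
    (h2 : ∀ u v, G.dist u v ≤ 2) : distMatrix G = G.diamTwoDistMatrix.map (↑) := by
  ext u v
  simp only [distMatrix, diamTwoDistMatrix, map_apply, of_apply]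
  split_ifs with huv hadj
  · simp [huv]
  · simp [dist_eq_one_iff_adj.2 hadj]
  · have := hG.one_lt_dist_of_ne_of_not_adj huv hadj
    have := h2 u v
    rw [show G.dist u v = 2 by omega]
    simp

end DiamTwo

def fin4Adj (b : Fin 6 → Bool) : Fin 4 → Fin 4 → Bool :=
  ![![false, b 0, b 1, b 2], ![b 0, false, b 3, b 4], ![b 1, b 3, false, b 5],
    ![b 2, b 4, b 5, false]]

theorem exists_perm_cycleGraph_four_of_det4_eq_zero : ∀ b : Fin 6 → Bool,
    det4 (of fun i j => if i = j then (0 : ℤ) else if fin4Adj b i j then 1 else 2) = 0 →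
    ∃ e : Equiv.Perm (Fin 4), ∀ i j,
      fin4Adj b i j = true ↔ (cycleGraph 4).Adj (e i) (e j) := by
  decide

theorem nonempty_iso_cycleGraph_four_of_det_eq_zero (H : SimpleGraph (Fin 4))
    [DecidableRel H.Adj] (h : H.diamTwoDistMatrix.det = 0) : Nonempty (H ≃g cycleGraph 4) := by
  set b : Fin 6 → Bool := ![H.Adj 0 1, H.Adj 0 2, H.Adj 0 3, H.Adj 1 2, H.Adj 1 3, H.Adj 2 3]
  have hb : ∀ i j, H.Adj i j ↔ fin4Adj b i j := by
    intro i j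
    fin_cases i <;> fin_cases j <;> simp [b, fin4Adj] <;> exact H.adj_comm _ _
  have hM : H.diamTwoDistMatrix =
      of fun i j => if i = j then 0 else if fin4Adj b i j then 1 else 2 := by
    ext i j
    simp [diamTwoDistMatrix, hb]
  obtain ⟨e, he⟩ :=
    exists_perm_cycleGraph_four_of_det4_eq_zero b (by rw [← det_eq_det4, ← hM, h])
  exact ⟨⟨e, fun {i j} => by rw [← he, hb]⟩⟩

set_option maxRecDepth 8000 in
theorem forall_iff_ne_or_exists_perm_path_of_fin_three : ∀ a : Fin 3 → Fin 3 → Bool,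
    (∀ i j, a i j = a j i) → (∀ i, a i i = false) → (∀ i, ∃ j, a i j = true) →
    (∀ i j, a i j = true ↔ i ≠ j) ∨
      ∃ e : Equiv.Perm (Fin 3), ∀ i j, a i j = true ↔
        ((e i : ℕ) + 1 = e j ∨ (e j : ℕ) + 1 = e i) := by
  decide

variable [Fintype V]

theorem Connected.nonempty_iso_top_or_pathGraph_three (hG : G.Connected)
    (hV : Fintype.card V = 3) :
    Nonempty (G ≃g (⊤ : SimpleGraph (Fin 3))) ∨ Nonempty (G ≃g pathGraph 3) := by
  classical
  have : Nontrivial V := Fintype.one_lt_card_iff_nontrivial.1 (by omega)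
  let σ := Fintype.equivFinOfCardEq hV
  rcases forall_iff_ne_or_exists_perm_path_of_fin_three
    (fun i j => G.Adj (σ.symm i) (σ.symm j)) (by simp [G.adj_comm]) (by simp) (fun i => by
      obtain ⟨w, hw⟩ := hG.preconnected.exists_adj_of_nontrivial (σ.symm i)
      exact ⟨σ w, by simpa using hw⟩) with hK | ⟨e, he⟩
  · exact Or.inl ⟨⟨σ, fun {u v} => by simpa using (hK (σ u) (σ v)).symm⟩⟩
  · exact Or.inr ⟨⟨σ.trans e, fun {u v} => by
      simpa [pathGraph_adj] using (he (σ u) (σ v)).symm⟩⟩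

theorem dist_le_two_of_rank_distMatrix_lt_four (hr : (distMatrix G).rank < 4) (u v : V) :
    G.dist u v ≤ 2 := by
  by_contra! huv
  obtain ⟨p, hp⟩ := exists_walk_of_dist_ne_zero (show G.dist u v ≠ 0 by omega)
  set f : Fin 4 → V := fun i => p.getVert i
  have hf : ∀ i j, distMatrix G (f i) (f j) = |((i : ℕ) : ℚ) - (j : ℕ)| := by
    intro i j
    rcases le_total (i : ℕ) j with hij | hji
    · rw [distMatrix, p.dist_getVert_eq_of_length_eq_dist hp hij (by omega), abs_sub_comm,
        abs_of_nonneg (by simpa using hij), Nat.cast_sub hij]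
    · rw [distMatrix, dist_comm, p.dist_getVert_eq_of_length_eq_dist hp hji (by omega),
        abs_of_nonneg (by simpa using hji), Nat.cast_sub hji]
  have hsub : (distMatrix G).submatrix f f =
      !![0, 1, 2, 3; 1, 0, 1, 2; 2, 1, 0, 1; 3, 2, 1, 0] := by
    ext i j
    fin_cases i <;> fin_cases j <;> norm_num [hf]
  have hdet : ((distMatrix G).submatrix f f).det ≠ 0 := by
    rw [hsub]
    simp [det_succ_row_zero, Fin.sum_univ_succ, Fin.succAbove]
    norm_num
  have := le_rank_of_det_submatrix_ne_zero _ f hdet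
  simp only [Fintype.card_fin] at this
  omega

theorem nonempty_comap_iso_cycleGraph_four (hG : G.Connected) (hr : (distMatrix G).rank < 4)
    {f : Fin 4 → V} (hf : Function.Injective f) : Nonempty (G.comap f ≃g cycleGraph 4) := by
  classical
  apply nonempty_iso_cycleGraph_four_of_det_eq_zero
  by_contra hdet
  have h4 := le_rank_of_det_submatrix_ne_zero (distMatrix G) f (by
    rw [distMatrix_eq_map_diamTwoDistMatrix hG (dist_le_two_of_rank_distMatrix_lt_four hr),
      submatrix_map, diamTwoDistMatrix_submatrix hf, ← Int.cast_det]
    exact_mod_cast hdet)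
  simp only [Fintype.card_fin] at h4
  omega

theorem card_le_four_of_forall_comap_iso_cycleGraph
    (h : ∀ f : Fin 4 → V, Function.Injective f → Nonempty (G.comap f ≃g cycleGraph 4)) :
    Fintype.card V ≤ 4 := by
  classical
  by_contra! hV
  obtain ⟨g⟩ := Function.Embedding.nonempty_of_card_le (α := Fin 5) (β := V)
    (by rw [Fintype.card_fin]; omega)
  let x : Fin 5 → ℕ := fun j => if G.Adj (g 0) (g j) then 1 else 0
  have hx : ∀ k : Fin 5, k ≠ 0 → x k + 2 = ∑ j, x j := by
    intro k hk
    obtain ⟨e⟩ := h (g ∘ k.succAbove) (g.injective.comp Fin.succAbove_right_injective)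
    have hdeg := e.degree_eq 0
    rw [cycleGraph_degree_three_le, degree_comap_eq_sum] at hdeg
    rw [Fin.sum_univ_succAbove x k, hdeg]
    simp [x, Fin.succAbove_ne_zero_zero hk]
  have hx0 : x 0 = 0 := by simp [x]
  have h1 := hx 1 (by decide)
  have h2 := hx 2 (by decide)
  have h3 := hx 3 (by decide)
  have h4 := hx 4 (by decide)
  rw [Fin.sum_univ_five] at h1 h2 h3 h4
  omega

end SimpleGraph

/-- If G is a connected finite simple graph whose distance matrix has rank 3, then G is
isomorphic to K₃, P₃, or C₄. -/
theorem distRank_eq_three_classification {V : Type*} [Fintype V] (G : SimpleGraph V)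
    (hG : G.Connected) (hr : (distMatrix G).rank = 3) :
    Nonempty (G ≃g (⊤ : SimpleGraph (Fin 3))) ∨
      Nonempty (G ≃g pathGraph 3) ∨ Nonempty (G ≃g cycleGraph 4) := by
  have hr4 : (distMatrix G).rank < 4 := by omega
  have hC4 : ∀ f : Fin 4 → V, Function.Injective f → Nonempty (G.comap f ≃g cycleGraph 4) :=
    fun f hf => nonempty_comap_iso_cycleGraph_four hG hr4 hf
  have hV3 : 3 ≤ Fintype.card V := hr ▸ (distMatrix G).rank_le_card_width
  have hV4 : Fintype.card V ≤ 4 := card_le_four_of_forall_comap_iso_cycleGraph hC4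
  rcases (by omega : Fintype.card V = 3 ∨ Fintype.card V = 4) with hV | hV
  · exact (hG.nonempty_iso_top_or_pathGraph_three hV).imp_right Or.inl
  · let σ := (Fintype.equivFinOfCardEq hV).symm
    obtain ⟨e⟩ := hC4 σ σ.injective
    exact Or.inr (Or.inr ⟨(Iso.comap σ G).symm.trans e⟩)
end

section
/- Every connected finite simple graph G with at least three vertices has distance rank rank_d(G) ≥ 3. -/
open SimpleGraph

/-- Every connected finite simple graph with at least three vertices has distance rank ≥ 3. -/
theorem three_le_distRank {V : Type*} [Fintype V] (G : SimpleGraph V)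
    (hG : G.Connected) (hV : 3 ≤ Fintype.card V) :
    3 ≤ (distMatrix G).rank := by
  classical
  obtain ⟨f⟩ : Nonempty (Fin 3 ↪ V) :=
    Function.Embedding.nonempty_of_card_le (by simpa using hV)
  set A := distMatrix G with hA
  set M : Matrix (Fin 3) (Fin 3) ℚ := A.submatrix f f with hM
  have hpos : ∀ i j : Fin 3, i ≠ j → 0 < M i j := by
    intro i j hij
    have := hG.pos_dist_of_ne (f.injective.ne hij)
    simp only [hM, hA, Matrix.submatrix_apply, distMatrix]
    exact_mod_cast this
  have hdiag : ∀ i : Fin 3, M i i = 0 := by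
    intro i
    simp [hM, hA, Matrix.submatrix_apply, distMatrix]
  have hdet : 0 < M.det := by
    rw [Matrix.det_fin_three, hdiag 0, hdiag 1, hdiag 2]
    have h1 := mul_pos (mul_pos (hpos 0 1 (by decide)) (hpos 1 2 (by decide)))
      (hpos 2 0 (by decide))
    have h2 := mul_pos (mul_pos (hpos 0 2 (by decide)) (hpos 1 0 (by decide)))
      (hpos 2 1 (by decide))
    nlinarith [h1, h2]
  have hMunit : IsUnit M := (Matrix.isUnit_iff_isUnit_det M).2 (isUnit_iff_ne_zero.mpr hdet.ne')
  have hcols : LinearIndependent ℚ (fun i => M.transpose i) :=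
    Matrix.linearIndependent_cols_iff_isUnit.2 hMunit
  have hli : LinearIndependent ℚ (fun i : Fin 3 => A.transpose (f i)) := by
    apply LinearIndependent.of_comp (LinearMap.funLeft ℚ ℚ f)
    exact hcols
  rw [Matrix.rank_eq_finrank_span_cols]
  have h1 : Module.finrank ℚ
      (Submodule.span ℚ (Set.range (fun i : Fin 3 => A.transpose (f i)))) = 3 := by
    rw [finrank_span_eq_card hli, Fintype.card_fin]
  have h2 : Submodule.span ℚ (Set.range (fun i : Fin 3 => A.transpose (f i))) ≤
      Submodule.span ℚ (Set.range A.transpose) := by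
    apply Submodule.span_mono
    rintro _ ⟨i, rfl⟩
    exact ⟨f i, rfl⟩
  calc 3 = _ := h1.symm
    _ ≤ _ := Submodule.finrank_mono h2
end

section
/- Let G be a connected finite simple graph with distance matrix D, and let v_i and v_j be two vertices that are either true twins (N[v_i] = N[v_j]) or false twins (N(v_i) = N(v_j)). If x is a vector in the null space of D (i.e., Dx = 0), then the coordinate of x at v_i equals the coordinate of x at v_j. -/
open SimpleGraph

private lemma dist_le_of_adjiff {V : Type*} (G : SimpleGraph V) (hG : G.Connected)
    (u v w : V) (hwu : w ≠ u)
    (H : ∀ a, a ≠ u → a ≠ v → (G.Adj u a ↔ G.Adj v a)) :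
    G.dist v w ≤ G.dist u w := by
  obtain ⟨p, hp⟩ := hG.exists_walk_length_eq_dist u w
  cases p with
  | nil => exact absurd rfl hwu.symm
  | @cons _ a _ h q =>
    simp only [SimpleGraph.Walk.length_cons] at hp
    by_cases hav : a = v
    · calc G.dist v w = G.dist a w := by rw [hav]
        _ ≤ q.length := SimpleGraph.dist_le q
        _ ≤ q.length + 1 := Nat.le_succ _
        _ = G.dist u w := hp
    · have hadj : G.Adj v a := (H a h.ne' hav).mp h
      calc G.dist v w ≤ (SimpleGraph.Walk.cons hadj q).length :=
            SimpleGraph.dist_le _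
        _ = G.dist u w := by simpa using hp

private lemma dist_eq_of_adjiff {V : Type*} (G : SimpleGraph V) (hG : G.Connected)
    (u v w : V) (hwu : w ≠ u) (hwv : w ≠ v)
    (H : ∀ a, a ≠ u → a ≠ v → (G.Adj u a ↔ G.Adj v a)) :
    G.dist u w = G.dist v w :=
  le_antisymm
    (dist_le_of_adjiff G hG v u w hwv (fun a hv hu => (H a hu hv).symm))
    (dist_le_of_adjiff G hG u v w hwu H)

/-- Two vertices are true twins if their closed neighborhoods coincide. -/
def TrueTwins {V : Type*} (G : SimpleGraph V) (u v : V) : Prop :=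
  insert u (G.neighborSet u) = insert v (G.neighborSet v)

/-- Two vertices are false twins if their open neighborhoods coincide. -/
def FalseTwins {V : Type*} (G : SimpleGraph V) (u v : V) : Prop :=
  G.neighborSet u = G.neighborSet v

/-- If u and v are true twins or false twins in a connected graph G and x is in the null
space of the distance matrix D of G, then the u- and v-coordinates of x agree. -/
theorem nullVector_eq_on_twins {V : Type*} [Fintype V] (G : SimpleGraph V)
    (hG : G.Connected) (u v : V)
    (htwin : TrueTwins G u v ∨ FalseTwins G u v)
    (x : V → ℚ) (hx : (distMatrix G).mulVec x = 0) :
    x u = x v := by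
  classical
  by_cases huv : u = v
  · rw [huv]
  -- unified adjacency hypothesis
  have H : ∀ a, a ≠ u → a ≠ v → (G.Adj u a ↔ G.Adj v a) := by
    intro a hau hav
    rcases htwin with ht | hf
    · have := Set.ext_iff.mp ht a
      simp only [Set.mem_insert_iff, SimpleGraph.mem_neighborSet, hau, hav,
        false_or] at this
      exact this
    · have := Set.ext_iff.mp hf a
      simpa using this
  have hdist : ∀ w, w ≠ u → w ≠ v → G.dist u w = G.dist v w :=
    fun w hwu hwv => dist_eq_of_adjiff G hG u v w hwu hwv H
  have hu0 : ∑ w, distMatrix G u w * x w = 0 := by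
    simpa [Matrix.mulVec, dotProduct] using congrFun hx u
  have hv0 : ∑ w, distMatrix G v w * x w = 0 := by
    simpa [Matrix.mulVec, dotProduct] using congrFun hx v
  have hsum : ∑ w, (distMatrix G u w - distMatrix G v w) * x w = 0 := by
    simp only [sub_mul, Finset.sum_sub_distrib, hu0, hv0, sub_zero]
  have hrest : ∑ w ∈ ({u, v} : Finset V),
      (distMatrix G u w - distMatrix G v w) * x w = 0 := by
    rw [← hsum]
    refine Finset.sum_subset (Finset.subset_univ _) ?_
    intro w _ hw
    simp only [Finset.mem_insert, Finset.mem_singleton, not_or] at hw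
    have := hdist w hw.1 hw.2
    simp [distMatrix, this]
  rw [Finset.sum_pair huv] at hrest
  have hcomm : G.dist u v = G.dist v u := SimpleGraph.dist_comm
  simp only [distMatrix, SimpleGraph.dist_self, hcomm, Nat.cast_zero] at hrest
  have hpos : (0 : ℚ) < (G.dist v u : ℚ) := by
    exact_mod_cast hG.pos_dist_of_ne (Ne.symm huv)
  have hd : (G.dist v u : ℚ) * x v = (G.dist v u : ℚ) * x u := by linarith
  exact (mul_left_cancel₀ hpos.ne' hd).symm
end

section
/- For every positive integer m, the graph G = K_2 ∨ (mK_1 + (K_1 ∨ 4K_1)) (a connected threshold graph, namely the one with power sequence [4,1,m,2]) has distance matrix of nullity exactly 1. -/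
/-!
Both sides of the outer join are nonempty, so any two distinct non-adjacent vertices have a
common neighbour and the distance matrix is `2 (J - I) - A`, with `A` the adjacency matrix.
Hence with `S = ∑ v, x v` the row `u` of `D x` is `2 (S - x u) - ∑_{v ~ u} x v`. The rows of
`D x = 0` force `x = S` on the dominating pair, `x = 0` on the `m` isolated vertices and
`x = -c/2` on the four leaves, where `c` is the value at the star centre; the total sum then
gives `c = S`. So the kernel is the line through `(2, 2 | 0, …, 0 | 2 | -1, -1, -1, -1)`.
-/

open SimpleGraph

/-- Disjoint union of two simple graphs. -/
def gUnion {α β : Type*} (G : SimpleGraph α) (H : SimpleGraph β) : SimpleGraph (α ⊕ β) where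
  Adj x y :=
    match x, y with
    | Sum.inl a, Sum.inl b => G.Adj a b
    | Sum.inr a, Sum.inr b => H.Adj a b
    | _, _ => False
  symm := by
    constructor
    rintro (a | a) (b | b) h
    · exact h.symm
    · exact h.elim
    · exact h.elim
    · exact h.symm
  loopless := by
    constructor
    rintro (a | a) h
    · exact G.loopless.irrefl a h
    · exact H.loopless.irrefl a h

/-- Join of two simple graphs: their disjoint union together with all edges between them. -/
def gJoin {α β : Type*} (G : SimpleGraph α) (H : SimpleGraph β) : SimpleGraph (α ⊕ β) where
  Adj x y :=
    match x, y with
    | Sum.inl a, Sum.inl b => G.Adj a b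
    | Sum.inr a, Sum.inr b => H.Adj a b
    | Sum.inl _, Sum.inr _ => True
    | Sum.inr _, Sum.inl _ => True
  symm := by
    constructor
    rintro (a | a) (b | b) h
    · exact h.symm
    · trivial
    · trivial
    · exact h.symm
  loopless := by
    constructor
    rintro (a | a) h
    · exact G.loopless.irrefl a h
    · exact H.loopless.irrefl a h

open Matrix

lemma Matrix.rank_add_finrank_ker {K m n : Type*} [Field K] [Fintype n] (A : Matrix m n K) :
    A.rank + Module.finrank K (LinearMap.ker A.mulVecLin) = Fintype.card n := by
  rw [Matrix.rank, LinearMap.finrank_range_add_finrank_ker, Module.finrank_fintype_fun_eq_card]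

namespace SimpleGraph

variable {V : Type*} {G : SimpleGraph V}

lemma dist_eq_ite_of_commonNeighbors_nonempty [DecidableEq V] [DecidableRel G.Adj]
    (hG : ∀ u v, u ≠ v → ¬G.Adj u v → (G.commonNeighbors u v).Nonempty) (u v : V) :
    G.dist u v = if u = v then 0 else if G.Adj u v then 1 else 2 := by
  split_ifs with huv hadj
  · simp [huv]
  · exact dist_eq_one_iff_adj.mpr hadj
  · simp [dist, edist_eq_two_iff.mpr ⟨huv, hadj, hG u v huv hadj⟩]

end SimpleGraph

lemma distMatrix_mulVec_apply_of_commonNeighbors_nonempty {V : Type*} [Fintype V] [DecidableEq V]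
    {G : SimpleGraph V} [DecidableRel G.Adj]
    (hG : ∀ u v, u ≠ v → ¬G.Adj u v → (G.commonNeighbors u v).Nonempty)
    (x : V → ℚ) (u : V) :
    (distMatrix G *ᵥ x) u = 2 * (∑ v, x v - x u) - ∑ v with G.Adj u v, x v := by
  have hterm : ∀ v, (G.dist u v : ℚ) * x v =
      2 * x v - 2 * (if u = v then x v else 0) - (if G.Adj u v then x v else 0) := by
    intro v
    rw [G.dist_eq_ite_of_commonNeighbors_nonempty hG]
    by_cases huv : u = v
    · subst huv; simp
    · by_cases hadj : G.Adj u v <;> simp [huv, hadj]; ring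
  simp only [mulVec, dotProduct, distMatrix, hterm, Finset.sum_sub_distrib, ← Finset.mul_sum,
    Finset.sum_ite_eq, Finset.mem_univ, if_true, Finset.sum_filter]
  ring

section JoinUnion

variable {α β : Type*} (G : SimpleGraph α) (H : SimpleGraph β) {a a' : α} {b b' : β}

@[simp] lemma gJoin_adj_inl_inl : (gJoin G H).Adj (.inl a) (.inl a') ↔ G.Adj a a' := Iff.rfl
@[simp] lemma gJoin_adj_inr_inr : (gJoin G H).Adj (.inr b) (.inr b') ↔ H.Adj b b' := Iff.rfl
@[simp] lemma gJoin_adj_inl_inr : (gJoin G H).Adj (.inl a) (.inr b) := trivial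
@[simp] lemma gJoin_adj_inr_inl : (gJoin G H).Adj (.inr b) (.inl a) := trivial
@[simp] lemma gUnion_adj_inl_inl : (gUnion G H).Adj (.inl a) (.inl a') ↔ G.Adj a a' := Iff.rfl
@[simp] lemma gUnion_adj_inr_inr : (gUnion G H).Adj (.inr b) (.inr b') ↔ H.Adj b b' := Iff.rfl
@[simp] lemma not_gUnion_adj_inl_inr : ¬(gUnion G H).Adj (.inl a) (.inr b) := id
@[simp] lemma not_gUnion_adj_inr_inl : ¬(gUnion G H).Adj (.inr b) (.inl a) := id

instance [DecidableRel G.Adj] [DecidableRel H.Adj] : DecidableRel (gJoin G H).Adj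
  | .inl _, .inl _ => decidable_of_iff _ (gJoin_adj_inl_inl G H).symm
  | .inr _, .inr _ => decidable_of_iff _ (gJoin_adj_inr_inr G H).symm
  | .inl _, .inr _ => .isTrue trivial
  | .inr _, .inl _ => .isTrue trivial

instance [DecidableRel G.Adj] [DecidableRel H.Adj] : DecidableRel (gUnion G H).Adj
  | .inl _, .inl _ => decidable_of_iff _ (gUnion_adj_inl_inl G H).symm
  | .inr _, .inr _ => decidable_of_iff _ (gUnion_adj_inr_inr G H).symm
  | .inl _, .inr _ => .isFalse id
  | .inr _, .inl _ => .isFalse id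

lemma gJoin_commonNeighbors_nonempty [Nonempty α] [Nonempty β] (x y : α ⊕ β)
    (hadj : ¬(gJoin G H).Adj x y) : ((gJoin G H).commonNeighbors x y).Nonempty := by
  rcases x with _ | _ <;> rcases y with _ | _
  · exact ⟨.inr (Classical.arbitrary β), trivial, trivial⟩
  · exact (hadj trivial).elim
  · exact (hadj trivial).elim
  · exact ⟨.inl (Classical.arbitrary α), trivial, trivial⟩

end JoinUnion

/-- Vertices: `inl i` the dominating `K₂`, `inr (inl k)` the isolated vertices,
`inr (inr (inl 0))` the star centre and `inr (inr (inr j))` its leaves. -/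
abbrev thresholdGraph (m : ℕ) : SimpleGraph (Fin 2 ⊕ (Fin m ⊕ (Fin 1 ⊕ Fin 4))) :=
  gJoin ⊤ (gUnion ⊥ (gJoin ⊤ ⊥))

namespace thresholdGraph

variable {m : ℕ} (x : Fin 2 ⊕ (Fin m ⊕ (Fin 1 ⊕ Fin 4)) → ℚ)

local notation "D" => distMatrix (thresholdGraph m)

lemma mulVec_apply (u : Fin 2 ⊕ (Fin m ⊕ (Fin 1 ⊕ Fin 4))) :
    (D *ᵥ x) u = 2 * (∑ v, x v - x u) - ∑ v with (thresholdGraph m).Adj u v, x v :=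
  distMatrix_mulVec_apply_of_commonNeighbors_nonempty
    (fun u v _ => gJoin_commonNeighbors_nonempty _ _ u v) x u

lemma mulVec_apply_dominating (i : Fin 2) : (D *ᵥ x) (.inl i) = ∑ v, x v - x (.inl i) := by
  rw [mulVec_apply]
  fin_cases i <;>
    simp [thresholdGraph, Finset.sum_filter, Fintype.sum_sum_type, Fin.sum_univ_two] <;> ring

lemma mulVec_apply_isolated (k : Fin m) :
    (D *ᵥ x) (.inr (.inl k)) = 2 * (∑ v, x v - x (.inr (.inl k))) - ∑ i, x (.inl i) := by
  rw [mulVec_apply]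
  simp [thresholdGraph, Finset.sum_filter, Fintype.sum_sum_type]

lemma mulVec_apply_center :
    (D *ᵥ x) (.inr (.inr (.inl 0))) = 2 * (∑ v, x v - x (.inr (.inr (.inl 0)))) -
      ∑ i, x (.inl i) - ∑ j, x (.inr (.inr (.inr j))) := by
  rw [mulVec_apply]
  simp [thresholdGraph, Finset.sum_filter, Fintype.sum_sum_type]
  ring

lemma mulVec_apply_leaf (j : Fin 4) :
    (D *ᵥ x) (.inr (.inr (.inr j))) =
      2 * (∑ v, x v - x (.inr (.inr (.inr j)))) - ∑ i, x (.inl i) -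
        x (.inr (.inr (.inl 0))) := by
  rw [mulVec_apply]
  simp [thresholdGraph, Finset.sum_filter, Fintype.sum_sum_type]
  ring

def nullVector (m : ℕ) : Fin 2 ⊕ (Fin m ⊕ (Fin 1 ⊕ Fin 4)) → ℚ :=
  Sum.elim (fun _ => 2) (Sum.elim (fun _ => 0) (Sum.elim (fun _ => 2) (fun _ => -1)))

lemma sum_nullVector : ∑ v, nullVector m v = 2 := by
  norm_num [nullVector, Fintype.sum_sum_type]

lemma distMatrix_mulVec_nullVector : D *ᵥ nullVector m = 0 := by
  funext u
  rcases u with i | k | c | j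
  · rw [mulVec_apply_dominating, sum_nullVector]; norm_num [nullVector]
  · rw [mulVec_apply_isolated, sum_nullVector]; norm_num [nullVector]
  · rw [Subsingleton.elim c 0, mulVec_apply_center, sum_nullVector]; norm_num [nullVector]
  · rw [mulVec_apply_leaf, sum_nullVector]; norm_num [nullVector]

lemma eq_smul_nullVector_of_mulVec_eq_zero (hx : D *ᵥ x = 0) :
    x = ((∑ v, x v) / 2) • nullVector m := by
  have hrow := congrFun hx
  simp only [Pi.zero_apply] at hrow
  have hdom : ∀ i, x (.inl i) = ∑ v, x v := fun i => by
    have := hrow (.inl i); rw [mulVec_apply_dominating] at this; linarith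
  have hdomSum : ∑ i, x (.inl i) = 2 * ∑ v, x v := by rw [Fin.sum_univ_two, hdom, hdom]; ring
  have hiso : ∀ k, x (.inr (.inl k)) = 0 := fun k => by
    have := hrow (.inr (.inl k)); rw [mulVec_apply_isolated, hdomSum] at this; linarith
  have hleaf : ∀ j, x (.inr (.inr (.inr j))) = - x (.inr (.inr (.inl 0))) / 2 := fun j => by
    have := hrow (.inr (.inr (.inr j))); rw [mulVec_apply_leaf, hdomSum] at this; linarith
  have hcenter : x (.inr (.inr (.inl 0))) = ∑ v, x v := by
    have hsplit : ∑ v, x v = ∑ i, x (.inl i) + ∑ k, x (.inr (.inl k)) +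
        x (.inr (.inr (.inl 0))) + ∑ j, x (.inr (.inr (.inr j))) := by
      simp only [Fintype.sum_sum_type, Fin.sum_univ_one]; ring
    simp only [hdomSum, hiso, hleaf, Finset.sum_const_zero, Finset.sum_const, Finset.card_univ,
      Fintype.card_fin, nsmul_eq_mul] at hsplit
    linarith
  funext u
  rcases u with i | k | c | j
  · simp only [nullVector, Pi.smul_apply, Sum.elim_inl, smul_eq_mul, hdom]; ring
  · simp [nullVector, hiso]
  · simp only [nullVector, Pi.smul_apply, Sum.elim_inl, Sum.elim_inr, smul_eq_mul,
      Subsingleton.elim c 0, hcenter]; ring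
  · simp only [nullVector, Pi.smul_apply, Sum.elim_inr, smul_eq_mul, hleaf, hcenter]; ring

lemma ker_distMatrix :
    LinearMap.ker (D).mulVecLin = ℚ ∙ nullVector m := by
  ext x
  rw [LinearMap.mem_ker, Matrix.mulVecLin_apply, Submodule.mem_span_singleton]
  refine ⟨fun hx => ⟨_, (eq_smul_nullVector_of_mulVec_eq_zero x hx).symm⟩, ?_⟩
  rintro ⟨c, rfl⟩
  rw [Matrix.mulVec_smul, distMatrix_mulVec_nullVector, smul_zero]

lemma nullVector_ne_zero : nullVector m ≠ 0 :=
  fun h => by simpa [nullVector] using congrFun h (.inl 0)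

end thresholdGraph

theorem threshold_family_nullity_one_general (m : ℕ) :
    Fintype.card (Fin 2 ⊕ (Fin m ⊕ (Fin 1 ⊕ Fin 4))) -
      (distMatrix (gJoin (⊤ : SimpleGraph (Fin 2))
        (gUnion (⊥ : SimpleGraph (Fin m))
          (gJoin (⊤ : SimpleGraph (Fin 1)) (⊥ : SimpleGraph (Fin 4)))))).rank = 1 := by
  have hnullity := (distMatrix (thresholdGraph m)).rank_add_finrank_ker
  rw [thresholdGraph.ker_distMatrix, finrank_span_singleton thresholdGraph.nullVector_ne_zero]
    at hnullity
  change _ - (distMatrix (thresholdGraph m)).rank = 1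
  omega

/-- For every positive integer m, the connected threshold graph
K₂ ∨ (mK₁ + (K₁ ∨ 4K₁)) (power sequence [4,1,m,2]) has distance matrix of nullity
exactly 1. -/
theorem threshold_family_nullity_one (m : ℕ) (hm : 1 ≤ m) :
    Fintype.card (Fin 2 ⊕ (Fin m ⊕ (Fin 1 ⊕ Fin 4))) -
      (distMatrix (gJoin (⊤ : SimpleGraph (Fin 2))
        (gUnion (⊥ : SimpleGraph (Fin m))
          (gJoin (⊤ : SimpleGraph (Fin 1)) (⊥ : SimpleGraph (Fin 4)))))).rank = 1 :=
  threshold_family_nullity_one_general m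
end

section
/- Let G be a connected trivially perfect graph (a connected graph with no induced subgraph isomorphic to P_4 or C_4) admitting a partition W = {W_1, …, W_k} of its vertex set into sets of true twins (each W_i is a set of pairwise true twins) with |W_i| ≥ 6 for every i = 1, …, k. Then the distance matrix D(G) is nonsingular, i.e., its nullity is 0. -/
open SimpleGraph

/-!
A connected {P₄, C₄}-free graph has a universal vertex, hence diameter at most `2`, so
`D = 2J - M` with `M = A + 2I`. Every union `s` of twin blocks is built up either as a disjoint
union of two such sets with no edges between them, or (when `s` is connected) by adding a block `W`
of universal twins to the rest. By induction, `M` is invertible on vectors supported in `s`, and the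
solution `w` of `M w = 𝟙` on `s` has weight `∑ w` in `(7/10, 1)` when `s` is connected and at least
`7/5` otherwise: disjoint unions add weights, and adding a block of `m ≥ 6` universal twins to a set
of weight `S` gives weight `1 - a` with `a = (1 - S) / (1 + m - m S) ∈ (0, 3/10)`. Finally, if
`D x = 0` then `M x = 2 (∑ x) 𝟙`, so `x = 2 (∑ x) w`, and `∑ w > 1/2` forces `∑ x = 0`, whence
`x = 0`.
-/

open Finset Matrix

theorem TrueTwins.adj {V : Type*} {G : SimpleGraph V} {u v : V} (h : TrueTwins G u v)
    (hne : u ≠ v) : G.Adj u v := by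
  have hu : u ∈ insert v (G.neighborSet v) := h ▸ Set.mem_insert u _
  exact (hu.resolve_left hne).symm

theorem TrueTwins.adj_of_adj {V : Type*} {G : SimpleGraph V} {u v y : V} (h : TrueTwins G u v)
    (huy : G.Adj u y) (hyv : y ≠ v) : G.Adj v y := by
  have hy : y ∈ insert v (G.neighborSet v) := h ▸ Set.mem_insert_of_mem u huy
  exact hy.resolve_left hyv

theorem indicator_add_indicator_of_support_subset {V M : Type*} [AddMonoid M] [DecidableEq V]
    {C R : Finset V} (hCR : Disjoint C R) {x : V → M} (hx : Function.support x ⊆ ↑(C ∪ R)) :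
    (C : Set V).indicator x + (R : Set V).indicator x = x := by
  have h := Set.indicator_union_of_disjoint (disjoint_coe.2 hCR) x
  rw [← coe_union, Set.indicator_eq_self.2 hx] at h
  exact h.symm

theorem sum_indicator_one_eq_card {V R : Type*} [Fintype V] [AddCommMonoidWithOne R]
    (W : Finset V) : ∑ v, (W : Set V).indicator (1 : V → R) v = #W := by
  classical
  simp [Set.indicator_apply]

namespace SimpleGraph

variable {V : Type*} {G : SimpleGraph V}

def IsTriviallyPerfect (G : SimpleGraph V) : Prop :=
  ¬ Nonempty (pathGraph 4 ↪g G) ∧ ¬ Nonempty (cycleGraph 4 ↪g G)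

theorem IsTriviallyPerfect.adj_of_path (hG : G.IsTriviallyPerfect) {a b c d : V}
    (hab : G.Adj a b) (hbc : G.Adj b c) (hcd : G.Adj c d) (hac : a ≠ c) (hbd : b ≠ d)
    (hnac : ¬ G.Adj a c) : G.Adj b d := by
  by_contra hnbd
  by_cases hda : G.Adj d a
  · refine hG.2 ⟨⟨⟨![a, b, c, d], ?_⟩, ?_⟩⟩
    · simp [Function.Injective, Fin.forall_fin_succ, hab.ne, hbc.ne, hcd.ne, hda.ne, hac, hbd,
        hab.ne.symm, hbc.ne.symm, hcd.ne.symm, hda.ne.symm, hac.symm, hbd.symm]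
    · intro i j
      change G.Adj (![a, b, c, d] i) (![a, b, c, d] j) ↔ _
      fin_cases i <;> fin_cases j <;>
        simp [cycleGraph_adj, hab, hbc, hcd, hda, hab.symm, hbc.symm, hcd.symm, hda.symm, hnac,
          hnbd, G.adj_comm c a, G.adj_comm d b] <;> decide
  · have had : a ≠ d := by rintro rfl; exact hnac hcd.symm
    refine hG.1 ⟨⟨⟨![a, b, c, d], ?_⟩, ?_⟩⟩
    · simp [Function.Injective, Fin.forall_fin_succ, hab.ne, hbc.ne, hcd.ne, had, hac, hbd,
        hab.ne.symm, hbc.ne.symm, hcd.ne.symm, had.symm, hac.symm, hbd.symm]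
    · intro i j
      change G.Adj (![a, b, c, d] i) (![a, b, c, d] j) ↔ _
      fin_cases i <;> fin_cases j <;>
        simp [pathGraph_adj, hab, hbc, hcd, hab.symm, hbc.symm, hcd.symm, hnac, hnbd, hda,
          G.adj_comm c a, G.adj_comm d b, G.adj_comm a d]

theorem dist_eq_two_of_adj_all {u v w : V} (hu : ∀ x, x ≠ u → G.Adj u x) (hvw : v ≠ w)
    (hnadj : ¬ G.Adj v w) : G.dist v w = 2 := by
  have hvu : v ≠ u := by rintro rfl; exact hnadj (hu w hvw.symm)
  have hwu : w ≠ u := by rintro rfl; exact hnadj (hu v hvw).symm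
  let p : G.Walk v w := .cons (hu v hvu).symm (.cons (hu w hwu) .nil)
  have hle : G.dist v w ≤ 2 := dist_le p
  have hpos : 0 < G.dist v w := p.reachable.pos_dist_of_ne hvw
  have hne : G.dist v w ≠ 1 := fun h => hnadj (dist_eq_one_iff_adj.1 h)
  omega

section DecidableEq

variable [DecidableEq V]

theorem IsClique.subset_of_not_adj {K A B : Finset V} (hK : G.IsClique (K : Set V))
    (hKAB : K ⊆ A ∪ B) (hAB : ∀ a ∈ A, ∀ b ∈ B, ¬ G.Adj a b) {v : V} (hvK : v ∈ K)
    (hvA : v ∈ A) : K ⊆ A := by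
  intro y hy
  rcases mem_union.1 (hKAB hy) with hyA | hyB
  · exact hyA
  · by_cases hvy : v = y
    · exact hvy ▸ hvA
    · exact absurd (hK hvK hy hvy) (hAB v hvA y hyB)

theorem Connected.eq_univ_of_not_adj [Fintype V] (hG : G.Connected) {C : Finset V}
    (hC : C.Nonempty) (hcut : ∀ x ∈ C, ∀ y ∈ univ \ C, ¬ G.Adj x y) : C = univ := by
  obtain ⟨a, ha⟩ := hC
  refine eq_univ_of_forall fun b => by_contra fun hb => ?_
  obtain ⟨d, -, hd, hd'⟩ := ((hG.preconnected a b).some).exists_boundary_dart (C : Set V) ha hb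
  exact hcut _ hd _ (by simpa using hd') d.adj

variable [DecidableRel G.Adj]

theorem IsTriviallyPerfect.card_adj_lt (hG : G.IsTriviallyPerfect) {s : Finset V} {u w x : V}
    (hu : u ∈ s) (hw : w ∈ s) (hx : x ∈ s) (huw : G.Adj u w) (hwx : G.Adj w x) (hxu : x ≠ u)
    (hux : ¬ G.Adj u x) : #{y ∈ s | G.Adj u y} < #{y ∈ s | G.Adj w y} := by
  have hsub : {y ∈ s | G.Adj u y}.erase w ⊆ ({y ∈ s | G.Adj w y}.erase u).erase x := by
    intro y hy
    obtain ⟨hyw, hys, huy⟩ : y ≠ w ∧ y ∈ s ∧ G.Adj u y := by simpa using hy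
    have hwy : G.Adj w y := hG.adj_of_path hwx.symm huw.symm huy hxu (Ne.symm hyw)
      fun h => hux h.symm
    have hyx : y ≠ x := by rintro rfl; exact hux huy
    simp [hys, hwy, huy.ne', hyx]
  have hwA : w ∈ {y ∈ s | G.Adj u y} := by simp [hw, huw]
  have huB : u ∈ {y ∈ s | G.Adj w y} := by simp [hu, huw.symm]
  have hxB : x ∈ {y ∈ s | G.Adj w y}.erase u := by simp [hxu, hx, hwx]
  have := card_le_card hsub
  have := card_erase_add_one hwA
  have := card_erase_add_one hxB
  have := card_erase_add_one huB
  omega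

/-- The closed neighbourhood in `s` of a vertex of maximum degree in `s` is cut off from the rest
of `s`; so it is either all of `s` or one side of a separation. -/
theorem IsTriviallyPerfect.exists_adj_all_or_exists_separation (hG : G.IsTriviallyPerfect)
    {s : Finset V} (hs : s.Nonempty) :
    (∃ u ∈ s, ∀ v ∈ s, v ≠ u → G.Adj u v) ∨
      ∃ C ⊂ s, C.Nonempty ∧ ∀ x ∈ C, ∀ y ∈ s \ C, ¬ G.Adj x y := by
  obtain ⟨u, hu, hmax⟩ := s.exists_max_image (fun v => #{y ∈ s | G.Adj v y}) hs
  set C := {v ∈ s | v = u ∨ G.Adj u v} with hC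
  have hcut : ∀ x ∈ C, ∀ y ∈ s \ C, ¬ G.Adj x y := by
    intro x hx y hy hxy
    simp only [hC, mem_sdiff, mem_filter, not_and, not_or] at hx hy
    obtain ⟨hys, hyu, huy⟩ : y ∈ s ∧ y ≠ u ∧ ¬ G.Adj u y := ⟨hy.1, hy.2 hy.1⟩
    rcases hx with ⟨hxs, rfl | hux⟩
    · exact huy hxy
    · exact (hmax x hxs).not_gt (hG.card_adj_lt hu hxs hys hux hxy hyu huy)
  by_cases hCs : C = s
  · refine .inl ⟨u, hu, fun v hv hvu => ?_⟩
    rw [← hCs, hC, mem_filter] at hv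
    exact hv.2.resolve_left hvu
  · exact .inr ⟨C, ssubset_of_subset_of_ne (filter_subset _ _) hCs, ⟨u, by simp [hC, hu]⟩, hcut⟩

theorem IsTriviallyPerfect.exists_adj_all [Fintype V] (hG : G.IsTriviallyPerfect)
    (hconn : G.Connected) : ∃ u, ∀ v, v ≠ u → G.Adj u v := by
  have := hconn.nonempty
  rcases hG.exists_adj_all_or_exists_separation (univ_nonempty (α := V)) with
    ⟨u, -, hu⟩ | ⟨C, hCs, hC, hcut⟩
  · exact ⟨u, fun v => hu v (mem_univ v)⟩
  · exact absurd (hconn.eq_univ_of_not_adj hC hcut) hCs.ne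

variable [Fintype V]

theorem distMatrix_eq_of_adj_all {u : V} (hu : ∀ x, x ≠ u → G.Adj u x) :
    distMatrix G = Matrix.of (fun _ _ => 2) - (G.adjMatrix ℚ + 2) := by
  ext v w
  by_cases hvw : v = w
  · subst hvw; simp [distMatrix, ofNat_apply]
  by_cases hadj : G.Adj v w
  · norm_num [distMatrix, hvw, hadj, dist_eq_one_iff_adj.2 hadj, ofNat_apply]
  · simp [distMatrix, hvw, hadj, dist_eq_two_of_adj_all hu hvw hadj, ofNat_apply]

theorem adjMatrix_add_two_mulVec_apply (x : V → ℚ) (v : V) :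
    ((G.adjMatrix ℚ + 2) *ᵥ x) v = 2 * x v + ∑ u ∈ G.neighborFinset v, x u := by
  rw [add_mulVec, Pi.add_apply, adjMatrix_mulVec_apply, ofNat_mulVec, Pi.smul_apply, smul_eq_mul,
    add_comm]

theorem adjMatrix_add_two_mulVec_apply_of_adj {x : V → ℚ} {v : V}
    (hx : ∀ u ∈ Function.support x, u ≠ v → G.Adj v u) :
    ((G.adjMatrix ℚ + 2) *ᵥ x) v = x v + ∑ u, x u := by
  have hN : ∑ u ∈ G.neighborFinset v, x u = ∑ u ∈ univ.erase v, x u := by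
    refine sum_subset (fun u hu => ?_) (fun u hu hnu => ?_)
    · simpa using ((mem_neighborFinset G v u).1 hu).ne'
    · by_contra hxu
      exact hnu ((mem_neighborFinset G v u).2 (hx u hxu (mem_erase.1 hu).1))
  rw [adjMatrix_add_two_mulVec_apply, hN, ← add_sum_erase _ _ (mem_univ v)]
  ring

theorem adjMatrix_add_two_mulVec_apply_of_not_adj {x : V → ℚ} {B : Finset V}
    (hx : Function.support x ⊆ B) {v : V} (hv : v ∉ B) (hvB : ∀ b ∈ B, ¬ G.Adj v b) :
    ((G.adjMatrix ℚ + 2) *ᵥ x) v = 0 := by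
  rw [adjMatrix_add_two_mulVec_apply, Function.notMem_support.1 fun h => hv (hx h), sum_eq_zero]
  · ring
  · intro u hu
    by_contra hxu
    exact hvB u (hx hxu) ((mem_neighborFinset G v u).1 hu)

variable (G) in
structure IsGoodSet (s : Finset V) : Prop where
  eq_zero : ∀ x : V → ℚ, Function.support x ⊆ s →
    (∀ v ∈ s, ((G.adjMatrix ℚ + 2) *ᵥ x) v = 0) → x = 0
  exists_weight : ∃ w : V → ℚ, Function.support w ⊆ s ∧
    (∀ v ∈ s, ((G.adjMatrix ℚ + 2) *ᵥ w) v = 1) ∧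
    (∑ v, w v < 1 ∨ 7 / 5 ≤ ∑ v, w v) ∧ (s.Nonempty → 7 / 10 < ∑ v, w v)

theorem isGoodSet_empty : G.IsGoodSet ∅ where
  eq_zero x hx _ := by simpa using hx
  exists_weight := ⟨0, by simp, by simp, by simp, by simp⟩

theorem adjMatrix_add_two_mulVec_indicator_apply_of_not_adj {C R : Finset V}
    (hCR : Disjoint C R) (hcut : ∀ a ∈ C, ∀ b ∈ R, ¬ G.Adj a b) {x : V → ℚ}
    (hx : Function.support x ⊆ ↑(C ∪ R)) {v : V} (hv : v ∈ C) :
    ((G.adjMatrix ℚ + 2) *ᵥ (C : Set V).indicator x) v = ((G.adjMatrix ℚ + 2) *ᵥ x) v := by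
  have hR : ((G.adjMatrix ℚ + 2) *ᵥ (R : Set V).indicator x) v = 0 :=
    adjMatrix_add_two_mulVec_apply_of_not_adj Set.support_indicator_subset
      (Finset.disjoint_left.1 hCR hv) (hcut v hv)
  conv_rhs => rw [← indicator_add_indicator_of_support_subset hCR hx, mulVec_add, Pi.add_apply,
    hR, add_zero]

theorem IsGoodSet.union_of_not_adj {C R : Finset V} (hC : G.IsGoodSet C) (hR : G.IsGoodSet R)
    (hCne : C.Nonempty) (hRne : R.Nonempty) (hCR : Disjoint C R)
    (hcut : ∀ a ∈ C, ∀ b ∈ R, ¬ G.Adj a b) : G.IsGoodSet (C ∪ R) := by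
  have hcut' : ∀ b ∈ R, ∀ a ∈ C, ¬ G.Adj b a := fun b hb a ha h => hcut a ha b hb h.symm
  constructor
  · intro x hx hx0
    have hxC : (C : Set V).indicator x = 0 := hC.eq_zero _ Set.support_indicator_subset
      fun v hv => by
        rw [adjMatrix_add_two_mulVec_indicator_apply_of_not_adj hCR hcut hx hv,
          hx0 v (mem_union_left R hv)]
    have hxR : (R : Set V).indicator x = 0 := hR.eq_zero _ Set.support_indicator_subset
      fun v hv => by
        rw [adjMatrix_add_two_mulVec_indicator_apply_of_not_adj hCR.symm hcut'
          (union_comm C R ▸ hx) hv, hx0 v (mem_union_right C hv)]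
    rw [← indicator_add_indicator_of_support_subset hCR hx, hxC, hxR, add_zero]
  · obtain ⟨wC, hwC, hMwC, -, hσC⟩ := hC.exists_weight
    obtain ⟨wR, hwR, hMwR, -, hσR⟩ := hR.exists_weight
    have hw : Function.support (wC + wR) ⊆ ↑(C ∪ R) :=
      (Function.support_add _ _).trans (coe_union C R ▸ Set.union_subset_union hwC hwR)
    have hsum : 7 / 5 < ∑ v, (wC + wR) v := by
      simp only [Pi.add_apply, sum_add_distrib]
      linarith [hσC hCne, hσR hRne]
    refine ⟨wC + wR, hw, fun v hv => ?_, .inr hsum.le, fun _ => by linarith⟩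
    rw [mulVec_add, Pi.add_apply]
    rcases mem_union.1 hv with hv | hv
    · rw [hMwC v hv, adjMatrix_add_two_mulVec_apply_of_not_adj hwR
        (Finset.disjoint_left.1 hCR hv) (hcut v hv), add_zero]
    · rw [hMwR v hv, adjMatrix_add_two_mulVec_apply_of_not_adj hwC
        (Finset.disjoint_right.1 hCR hv) (hcut' v hv), zero_add]

/-- The bound `6 ≤ m` is sharp here: for `m = 5` and `S = 7/5` the quotient is `2/5`. -/
theorem blockWeight_bounds {m S : ℚ} (hm : 6 ≤ m) (hS : S < 1 ∨ 7 / 5 ≤ S) :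
    1 + m - m * S ≠ 0 ∧ 0 < (1 - S) / (1 + m - m * S) ∧ (1 - S) / (1 + m - m * S) < 3 / 10 := by
  rcases hS with hS | hS
  · have hd : 1 < 1 + m - m * S := by nlinarith
    refine ⟨by linarith, div_pos (by linarith) (by linarith), ?_⟩
    rw [div_lt_iff₀ (by linarith)]
    nlinarith
  · have hd : 1 + m - m * S < 0 := by nlinarith
    refine ⟨hd.ne, div_pos_of_neg_of_neg (by linarith) hd, ?_⟩
    rw [div_lt_iff_of_neg hd]
    nlinarith

theorem adjMatrix_add_two_mulVec_indicator_one_apply {W : Finset V} {v : V} (hv : v ∉ W)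
    (hWv : ∀ u ∈ W, G.Adj u v) :
    ((G.adjMatrix ℚ + 2) *ᵥ (W : Set V).indicator (1 : V → ℚ)) v = #W := by
  rw [adjMatrix_add_two_mulVec_apply_of_adj fun u hu _ =>
      (hWv u (Set.support_indicator_subset hu)).symm,
    Set.indicator_of_notMem (mem_coe.not.2 hv), sum_indicator_one_eq_card, zero_add]

theorem IsGoodSet.eq_zero_of_union_of_adj {W t : Finset V} (ht : G.IsGoodSet t)
    (hWt : Disjoint W t) (hW : 6 ≤ #W) (hadj : ∀ v ∈ W, ∀ u ∈ W ∪ t, u ≠ v → G.Adj v u)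
    {x : V → ℚ} (hx : Function.support x ⊆ ↑(W ∪ t))
    (hx0 : ∀ v ∈ W ∪ t, ((G.adjMatrix ℚ + 2) *ᵥ x) v = 0) : x = 0 := by
  obtain ⟨wt, hwt, hMwt, hS, -⟩ := ht.exists_weight
  set m : ℚ := (#W : ℚ)
  set S := ∑ v, wt v
  set σ := ∑ v, x v
  set e : V → ℚ := (W : Set V).indicator 1
  have hxW : (W : Set V).indicator x = (-σ) • e := by
    ext v
    by_cases hv : v ∈ W
    · have h := hx0 v (mem_union_left _ hv)
      rw [adjMatrix_add_two_mulVec_apply_of_adj fun u hu => hadj v hv u (hx hu)] at h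
      simp only [e, Set.indicator_of_mem (mem_coe.2 hv), Pi.smul_apply, Pi.one_apply,
        smul_eq_mul, mul_one]
      linarith
    · simp [e, hv]
  have hMe : ∀ v ∈ t, ((G.adjMatrix ℚ + 2) *ᵥ e) v = m := fun v hv =>
    adjMatrix_add_two_mulVec_indicator_one_apply (Finset.disjoint_right.1 hWt hv) fun u hu =>
      hadj u hu v (mem_union_right _ hv) fun h => Finset.disjoint_left.1 hWt hu (h ▸ hv)
  have hxt : (t : Set V).indicator x = (m * σ) • wt := by
    refine sub_eq_zero.1 (ht.eq_zero _ ?_ fun v hv => ?_)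
    · exact (Function.support_sub _ _).trans <| Set.union_subset Set.support_indicator_subset
        ((Function.support_smul_subset_right _ _).trans hwt)
    · have h := hx0 v (mem_union_right _ hv)
      rw [← indicator_add_indicator_of_support_subset hWt hx, mulVec_add, Pi.add_apply, hxW,
        mulVec_smul, Pi.smul_apply, hMe v hv, smul_eq_mul] at h
      rw [mulVec_sub, mulVec_smul, Pi.sub_apply, Pi.smul_apply, hMwt v hv, smul_eq_mul]
      linarith
  have hσ : σ = -σ * m + m * σ * S := calc
    σ = ∑ v, ((W : Set V).indicator x + (t : Set V).indicator x) v := by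
      rw [indicator_add_indicator_of_support_subset hWt hx]
    _ = -σ * m + m * σ * S := by
      simp only [Pi.add_apply, sum_add_distrib, hxW, hxt, Pi.smul_apply, smul_eq_mul, ← mul_sum,
        sum_indicator_one_eq_card, e, m, S]
  have hσ0 : σ = 0 := by
    obtain ⟨hd, -⟩ := blockWeight_bounds (m := m) (by simp only [m]; exact_mod_cast hW) hS
    exact (mul_eq_zero.1 (by linear_combination hσ : σ * (1 + m - m * S) = 0)).resolve_right hd
  rw [← indicator_add_indicator_of_support_subset hWt hx, hxW, hxt, hσ0]
  simp

theorem IsGoodSet.exists_weight_union_of_adj {W t : Finset V} (ht : G.IsGoodSet t)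
    (hWt : Disjoint W t) (hW : 6 ≤ #W) (hadj : ∀ v ∈ W, ∀ u ∈ W ∪ t, u ≠ v → G.Adj v u) :
    ∃ w : V → ℚ, Function.support w ⊆ ↑(W ∪ t) ∧
      (∀ v ∈ W ∪ t, ((G.adjMatrix ℚ + 2) *ᵥ w) v = 1) ∧ 7 / 10 < ∑ v, w v ∧ ∑ v, w v < 1 := by
  obtain ⟨wt, hwt, hMwt, hS, -⟩ := ht.exists_weight
  set m : ℚ := (#W : ℚ)
  set S := ∑ v, wt v
  obtain ⟨hd, ha0, ha3⟩ := blockWeight_bounds (m := m) (by simp only [m]; exact_mod_cast hW) hS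
  set a := (1 - S) / (1 + m - m * S)
  have ha : a * (1 + m - m * S) = 1 - S := div_mul_cancel₀ _ hd
  set e : V → ℚ := (W : Set V).indicator 1
  set w := a • e + (1 - m * a) • wt
  have hw : Function.support w ⊆ ↑(W ∪ t) := (Function.support_add _ _).trans <| coe_union W t ▸
    Set.union_subset_union
      ((Function.support_smul_subset_right _ _).trans Set.support_indicator_subset)
      ((Function.support_smul_subset_right _ _).trans hwt)
  have hsum : ∑ v, w v = 1 - a := by
    simp only [w, e, Pi.add_apply, Pi.smul_apply, smul_eq_mul, sum_add_distrib, ← mul_sum,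
      sum_indicator_one_eq_card]
    linear_combination ha
  refine ⟨w, hw, fun v hv => ?_, by linarith, by linarith⟩
  rcases mem_union.1 hv with hv | hv
  · have hwt0 : wt v = 0 :=
      Function.notMem_support.1 fun h => Finset.disjoint_left.1 hWt hv (hwt h)
    rw [adjMatrix_add_two_mulVec_apply_of_adj fun u hu => hadj v hv u (hw hu), hsum]
    simp [w, e, hv, hwt0]
  · rw [mulVec_add, mulVec_smul, mulVec_smul, Pi.add_apply, Pi.smul_apply, Pi.smul_apply,
      adjMatrix_add_two_mulVec_indicator_one_apply (Finset.disjoint_right.1 hWt hv) fun u hu =>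
        hadj u hu v (mem_union_right _ hv) fun h => Finset.disjoint_left.1 hWt hu (h ▸ hv),
      hMwt v hv, smul_eq_mul, smul_eq_mul]
    ring

theorem IsGoodSet.union_of_adj {W t : Finset V} (ht : G.IsGoodSet t) (hWt : Disjoint W t)
    (hW : 6 ≤ #W) (hadj : ∀ v ∈ W, ∀ u ∈ W ∪ t, u ≠ v → G.Adj v u) : G.IsGoodSet (W ∪ t) where
  eq_zero _ hx hx0 := ht.eq_zero_of_union_of_adj hWt hW hadj hx hx0
  exists_weight :=
    have ⟨w, hw, hMw, hσ, hσ'⟩ := ht.exists_weight_union_of_adj hWt hW hadj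
    ⟨w, hw, hMw, .inl hσ', fun _ => hσ⟩

theorem IsTriviallyPerfect.isGoodSet {ι : Type*} (hG : G.IsTriviallyPerfect)
    {P : ι → Finset V} (hpart : ∀ v, ∃! i, v ∈ P i)
    (htwins : ∀ i, ∀ u ∈ P i, ∀ v ∈ P i, TrueTwins G u v) (hsize : ∀ i, 6 ≤ #(P i))
    (s : Finset V) (hs : ∀ i, ∀ v ∈ s, v ∈ P i → P i ⊆ s) : G.IsGoodSet s := by
  induction s using Finset.strongInduction with
  | H s ih =>
  have hclique : ∀ i, G.IsClique (P i : Set V) := fun i u hu v hv huv =>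
    (htwins i u hu v hv).adj huv
  rcases s.eq_empty_or_nonempty with rfl | hne
  · exact isGoodSet_empty
  rcases hG.exists_adj_all_or_exists_separation hne with ⟨u, hu, huniv⟩ | ⟨C, hCs, hCne, hcut⟩
  · obtain ⟨i, hui, -⟩ := hpart u
    have hWs : P i ⊆ s := hs i u hu hui
    have hts : ∀ j, ∀ v ∈ s \ P i, v ∈ P j → P j ⊆ s \ P i := by
      intro j v hv hvj y hy
      refine mem_sdiff.2 ⟨hs j v (mem_sdiff.1 hv).1 hvj hy, fun hyi => (mem_sdiff.1 hv).2 ?_⟩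
      exact (hpart y).unique hy hyi ▸ hvj
    have hadj : ∀ v ∈ P i, ∀ y ∈ P i ∪ s \ P i, y ≠ v → G.Adj v y := by
      intro v hv y hy hyv
      rw [union_sdiff_of_subset hWs] at hy
      by_cases hvu : v = u
      · exact hvu ▸ huniv y hy (hvu ▸ hyv)
      by_cases hyu : y = u
      · exact hyu ▸ (hclique i hui hv (Ne.symm hvu)).symm
      · exact (htwins i u hui v hv).adj_of_adj (huniv y hy hyu) hyv
    have := (ih _ (sdiff_ssubset hWs ⟨u, hui⟩) hts).union_of_adj disjoint_sdiff (hsize i) hadj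
    rwa [union_sdiff_of_subset hWs] at this
  · have hCs' : C ⊆ s := hCs.subset
    have hcut' : ∀ a ∈ s \ C, ∀ b ∈ C, ¬ G.Adj a b := fun a ha b hb h => hcut b hb a ha h.symm
    have hC : ∀ j, ∀ v ∈ C, v ∈ P j → P j ⊆ C := fun j v hv hvj =>
      (hclique j).subset_of_not_adj ((union_sdiff_of_subset hCs').symm ▸ hs j v (hCs' hv) hvj)
        hcut hvj hv
    have hsC : ∀ j, ∀ v ∈ s \ C, v ∈ P j → P j ⊆ s \ C := fun j v hv hvj =>
      (hclique j).subset_of_not_adj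
        ((sdiff_union_of_subset hCs').symm ▸ hs j v (mem_sdiff.1 hv).1 hvj) hcut' hvj hv
    have := (ih C hCs hC).union_of_not_adj (ih _ (sdiff_ssubset hCs' hCne) hsC) hCne
      (sdiff_nonempty.2 (not_subset_of_ssubset hCs)) disjoint_sdiff hcut
    rwa [union_sdiff_of_subset hCs'] at this

theorem IsGoodSet.det_ne_zero [Nonempty V] (h : G.IsGoodSet univ) :
    (Matrix.of (fun _ _ => (2 : ℚ)) - (G.adjMatrix ℚ + 2)).det ≠ 0 := by
  rw [Ne, ← exists_mulVec_eq_zero_iff]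
  rintro ⟨x, hx0, hx⟩
  obtain ⟨w, -, hMw, -, hσw⟩ := h.exists_weight
  set σ := ∑ v, x v
  have hMx : (G.adjMatrix ℚ + 2) *ᵥ x = fun _ => 2 * σ := by
    rw [sub_mulVec, sub_eq_zero] at hx
    rw [← hx]
    ext v
    simp [mulVec, dotProduct, σ, mul_sum]
  have hxw : x = (2 * σ) • w := sub_eq_zero.1 <| h.eq_zero _ (by simp) fun v _ => by
    simp [mulVec_sub, mulVec_smul, hMx, hMw v (mem_univ v)]
  have hσ : σ = 2 * σ * ∑ v, w v := calc
    σ = ∑ v, ((2 * σ) • w) v := by rw [← hxw]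
    _ = 2 * σ * ∑ v, w v := by simp [mul_sum]
  have hσ0 : σ = 0 := by nlinarith [hσw univ_nonempty]
  exact hx0 (by rw [hxw, hσ0]; simp)

end DecidableEq

end SimpleGraph

/-- If a connected trivially perfect graph (no induced P₄ and no induced C₄) admits a
partition of its vertex set into sets of pairwise true twins, each of size at least 6,
then its distance matrix is nonsingular. -/
theorem distMatrix_nonsingular_of_triviallyPerfect {V : Type*} [Fintype V] [DecidableEq V]
    (G : SimpleGraph V) (hG : G.Connected)
    (hP4 : ¬ Nonempty (pathGraph 4 ↪g G))
    (hC4 : ¬ Nonempty (cycleGraph 4 ↪g G))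
    {k : ℕ} (P : Fin k → Finset V)
    (hpart : ∀ v : V, ∃! i, v ∈ P i)
    (htwins : ∀ i, ∀ u ∈ P i, ∀ v ∈ P i, TrueTwins G u v)
    (hsize : ∀ i, 6 ≤ (P i).card) :
    (distMatrix G).det ≠ 0 := by
  classical
  have hTP : G.IsTriviallyPerfect := ⟨hP4, hC4⟩
  have : Nonempty V := hG.nonempty
  obtain ⟨u, hu⟩ := hTP.exists_adj_all hG
  rw [distMatrix_eq_of_adj_all hu]
  exact (hTP.isGoodSet hpart htwins hsize univ fun _ _ _ _ => subset_univ _).det_ne_zero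
end

section
/- For every integer k ≥ 2, the connected trivially perfect graph G = K_2 ∨ (H + H + ⋯ + H) (the join of K_2 with the disjoint union of k copies of H), where H = K_3 ∨ (K_2 + K_2), has 7k + 2 vertices and its distance matrix has nullity exactly k. -/
open SimpleGraph

/-- The disjoint union of k copies of a simple graph H. -/
def copies (k : ℕ) {α : Type*} (H : SimpleGraph α) : SimpleGraph (Fin k × α) where
  Adj x y := x.1 = y.1 ∧ H.Adj x.2 y.2
  symm := by
    constructor
    rintro x y ⟨h1, h2⟩
    exact ⟨h1.symm, h2.symm⟩
  loopless := by
    constructor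
    rintro x ⟨h1, h2⟩
    exact H.loopless.irrefl _ h2

/-- The graph H = K₃ ∨ (K₂ + K₂). -/
def Hgraph : SimpleGraph (Fin 3 ⊕ (Fin 2 ⊕ Fin 2)) :=
  gJoin (⊤ : SimpleGraph (Fin 3))
    (gUnion (⊤ : SimpleGraph (Fin 2)) (⊤ : SimpleGraph (Fin 2)))

/-!
All distances in `K₂ ∨ (H + ⋯ + H)` are at most two, so its distance matrix is `2(J - I) - A`.
Write `vᵢ` for the restriction of a vector `v` to the `i`-th copy of `H` and `σᵢ = ∑ vᵢ`. Then
`v` lies in the kernel iff both hub entries equal `-∑ σᵢ` and `D_H vᵢ = 2σᵢ · 𝟙` for every `i`,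
where `D_H = 2(J - I) - A_H`; with two hubs the hub equations are consistent for every `σ`. For
`H = K₃ ∨ (K₂ + K₂)` the matrix `D_H` is invertible and `g = (-1, -1, -1, 1, 1, 1, 1)` satisfies
`D_H g = 2 · 𝟙` and `∑ g = 1`, so the kernel consists exactly of the vectors with `vᵢ = σᵢ g`, one
for each `σ ∈ ℚᵏ`.

The graph is trivially perfect because an induced `P₄` or `C₄` contains no universal vertex and
lies in a single copy of `H`, hence in `K₂ + K₂`, a disjoint union of cliques.
-/

open Sum Matrix

variable {α β γ : Type*}

def gJoinInr (G : SimpleGraph α) (H : SimpleGraph β) : H ↪g gJoin G H :=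
  ⟨Function.Embedding.inr, Iff.rfl⟩

def copiesInclusion (k : ℕ) (H : SimpleGraph β) (i : Fin k) : H ↪g copies k H :=
  ⟨⟨(i, ·), Prod.mk_right_injective i⟩, by simp [copies]⟩

theorem gJoin_top_adj_inl {H : SimpleGraph β} {a : α} {v : α ⊕ β} :
    (gJoin ⊤ H).Adj (inl a) v ↔ inl a ≠ v := by
  cases v <;> simp [gJoin]

theorem exists_eq_inr_of_not_adj_gJoin_top {H : SimpleGraph β} {u v : α ⊕ β} (huv : u ≠ v)
    (h : ¬(gJoin ⊤ H).Adj u v) : ∃ y, u = inr y := by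
  cases u with
  | inl a => exact absurd (gJoin_top_adj_inl.2 huv) h
  | inr y => exact ⟨y, rfl⟩

theorem gJoin_top_connected [Nonempty α] (H : SimpleGraph β) :
    (gJoin (⊤ : SimpleGraph α) H).Connected := by
  obtain ⟨a⟩ := ‹Nonempty α›
  have hreach : ∀ v, (gJoin ⊤ H).Reachable (inl a) v := fun v => by
    by_cases h : inl a = v
    · exact h ▸ Reachable.refl _
    · exact (gJoin_top_adj_inl.2 h).reachable
  exact (connected_iff _).2 ⟨fun u v => (hreach u).symm.trans (hreach v), ⟨inl a⟩⟩

theorem gUnion_top_adj_trans {u v w : α ⊕ β} (huv : (gUnion ⊤ ⊤).Adj u v)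
    (hvw : (gUnion ⊤ ⊤).Adj v w) (huw : u ≠ w) : (gUnion ⊤ ⊤).Adj u w := by
  rcases u with a | a <;> rcases v with b | b <;> rcases w with c | c <;> simp_all [gUnion]

namespace SimpleGraph

variable {V W : Type*} {G : SimpleGraph V} {G' : SimpleGraph W}

/-- Four vertices inducing a `P₄` or a `C₄`: `a ≠ d` is forced, and `G.Adj a d` decides which. -/
structure IsInducedP4OrC4 (G : SimpleGraph V) (a b c d : V) : Prop where
  adj_ab : G.Adj a b
  adj_bc : G.Adj b c
  adj_cd : G.Adj c d
  ne_ac : a ≠ c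
  not_adj_ac : ¬G.Adj a c
  ne_bd : b ≠ d
  not_adj_bd : ¬G.Adj b d

def HasInducedP4OrC4 (G : SimpleGraph V) : Prop :=
  ∃ a b c d, G.IsInducedP4OrC4 a b c d

theorem isInducedP4OrC4_map_iff (f : G ↪g G') {a b c d : V} :
    G'.IsInducedP4OrC4 (f a) (f b) (f c) (f d) ↔ G.IsInducedP4OrC4 a b c d := by
  constructor <;> rintro ⟨⟩ <;> constructor <;> simp_all [f.injective.ne_iff]

theorem HasInducedP4OrC4.map (f : G ↪g G') (h : G.HasInducedP4OrC4) : G'.HasInducedP4OrC4 :=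
  let ⟨a, b, c, d, h⟩ := h
  ⟨f a, f b, f c, f d, (isInducedP4OrC4_map_iff f).2 h⟩

theorem pathGraph_four_hasInducedP4OrC4 : (pathGraph 4).HasInducedP4OrC4 :=
  ⟨0, 1, 2, 3, by constructor <;> simp [pathGraph_adj]⟩

theorem cycleGraph_four_hasInducedP4OrC4 : (cycleGraph 4).HasInducedP4OrC4 :=
  ⟨0, 1, 2, 3, by constructor <;> decide⟩

theorem not_hasInducedP4OrC4_of_adj_trans
    (htrans : ∀ {a b c}, G.Adj a b → G.Adj b c → a ≠ c → G.Adj a c) :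
    ¬G.HasInducedP4OrC4 :=
  fun ⟨_, _, _, _, h⟩ => h.not_adj_ac (htrans h.adj_ab h.adj_bc h.ne_ac)

theorem HasInducedP4OrC4.of_gJoin_top {H : SimpleGraph β}
    (h : (gJoin (⊤ : SimpleGraph α) H).HasInducedP4OrC4) : H.HasInducedP4OrC4 := by
  obtain ⟨a, b, c, d, h⟩ := h
  obtain ⟨a, rfl⟩ := exists_eq_inr_of_not_adj_gJoin_top h.ne_ac h.not_adj_ac
  obtain ⟨c, rfl⟩ := exists_eq_inr_of_not_adj_gJoin_top h.ne_ac.symm (mt Adj.symm h.not_adj_ac)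
  obtain ⟨b, rfl⟩ := exists_eq_inr_of_not_adj_gJoin_top h.ne_bd h.not_adj_bd
  obtain ⟨d, rfl⟩ := exists_eq_inr_of_not_adj_gJoin_top h.ne_bd.symm (mt Adj.symm h.not_adj_bd)
  exact ⟨a, b, c, d, (isInducedP4OrC4_map_iff (gJoinInr ⊤ H)).1 h⟩

theorem HasInducedP4OrC4.of_copies {k : ℕ} {H : SimpleGraph β}
    (h : (copies k H).HasInducedP4OrC4) : H.HasInducedP4OrC4 := by
  obtain ⟨⟨i, a⟩, ⟨j, b⟩, ⟨l, c⟩, ⟨m, d⟩, h⟩ := h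
  obtain ⟨rfl, -⟩ := h.adj_ab
  obtain ⟨rfl, -⟩ := h.adj_bc
  obtain ⟨rfl, -⟩ := h.adj_cd
  exact ⟨a, b, c, d, (isInducedP4OrC4_map_iff (copiesInclusion k H i)).1 h⟩

end SimpleGraph

theorem not_hasInducedP4OrC4_gJoin_top_copies_Hgraph (k : ℕ) :
    ¬(gJoin (⊤ : SimpleGraph (Fin 2)) (copies k Hgraph)).HasInducedP4OrC4 := fun h =>
  not_hasInducedP4OrC4_of_adj_trans gUnion_top_adj_trans h.of_gJoin_top.of_copies.of_gJoin_top

-- `2(J - I) - A`: the distance matrix of a graph of diameter at most two.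
open Classical in
noncomputable def truncDistMatrix {V : Type*} (G : SimpleGraph V) : Matrix V V ℚ :=
  of fun u v => if u = v then 0 else if G.Adj u v then 1 else 2

theorem distMatrix_eq_truncDistMatrix {V : Type*} [Fintype V] {G : SimpleGraph V}
    (h : ∀ u v, u ≠ v → ¬G.Adj u v → (G.commonNeighbors u v).Nonempty) :
    distMatrix G = truncDistMatrix G := by
  ext u v
  simp only [distMatrix, truncDistMatrix, of_apply]
  split_ifs with huv hadj
  · simp [huv]
  · simp [dist_eq_one_iff_adj.2 hadj]
  · simp [SimpleGraph.dist, edist_eq_two_iff.2 ⟨huv, hadj, h u v huv hadj⟩]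

theorem distMatrix_gJoin_top [Fintype α] [Fintype β] [Nonempty α] (H : SimpleGraph β) :
    distMatrix (gJoin (⊤ : SimpleGraph α) H) = truncDistMatrix (gJoin ⊤ H) := by
  refine distMatrix_eq_truncDistMatrix fun u v huv hadj => ?_
  obtain ⟨x, rfl⟩ := exists_eq_inr_of_not_adj_gJoin_top huv hadj
  obtain ⟨y, rfl⟩ := exists_eq_inr_of_not_adj_gJoin_top huv.symm (mt Adj.symm hadj)
  exact ⟨inl (Classical.arbitrary α), by simp [mem_commonNeighbors, gJoin]⟩

theorem truncDistMatrix_gJoin (G : SimpleGraph α) (H : SimpleGraph β) :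
    truncDistMatrix (gJoin G H) =
      fromBlocks (truncDistMatrix G) (of fun _ _ => 1) (of fun _ _ => 1) (truncDistMatrix H) := by
  ext (a | a) (b | b) <;> simp only [truncDistMatrix, gJoin, of_apply, fromBlocks_apply₁₁,
    fromBlocks_apply₁₂, fromBlocks_apply₂₁, fromBlocks_apply₂₂] <;> split_ifs <;> simp_all

theorem truncDistMatrix_gUnion (G : SimpleGraph α) (H : SimpleGraph β) :
    truncDistMatrix (gUnion G H) =
      fromBlocks (truncDistMatrix G) (of fun _ _ => 2) (of fun _ _ => 2) (truncDistMatrix H) := by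
  ext (a | a) (b | b) <;> simp only [truncDistMatrix, gUnion, of_apply, fromBlocks_apply₁₁,
    fromBlocks_apply₁₂, fromBlocks_apply₂₁, fromBlocks_apply₂₂] <;> split_ifs <;> simp_all

theorem of_const_mulVec [Fintype β] (c : ℚ) (x : β → ℚ) :
    (of fun (_ : α) (_ : β) => c) *ᵥ x = fun _ => c * ∑ b, x b := by
  ext
  simp [mulVec, dotProduct, Finset.mul_sum]

theorem truncDistMatrix_top_mulVec [Fintype α] (x : α → ℚ) (a : α) :
    (truncDistMatrix ⊤ *ᵥ x) a = ∑ b, x b - x a := by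
  classical
  have hentry : ∀ b, truncDistMatrix ⊤ a b = 1 - if a = b then 1 else 0 := by
    intro b
    by_cases hab : a = b <;> simp [truncDistMatrix, hab]
  simp only [mulVec, dotProduct, hentry, sub_mul, one_mul, ite_mul, zero_mul,
    Finset.sum_sub_distrib, Finset.sum_ite_eq, Finset.mem_univ, if_true]

theorem truncDistMatrix_copies_mulVec [Fintype β] {k : ℕ} (H : SimpleGraph β)
    (w : Fin k × β → ℚ) (i : Fin k) (x : β) :
    (truncDistMatrix (copies k H) *ᵥ w) (i, x) =
      2 * ∑ p, w p - 2 * ∑ y, w (i, y) + (truncDistMatrix H *ᵥ fun y => w (i, y)) x := by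
  have hentry : ∀ j y, truncDistMatrix (copies k H) (i, x) (j, y) =
      2 + if i = j then truncDistMatrix H x y - 2 else 0 := by
    intro j y
    by_cases hij : i = j
    · subst hij
      simp only [truncDistMatrix, copies, of_apply, if_true, true_and, Prod.mk.injEq]
      split_ifs <;> simp_all
    · simp [truncDistMatrix, copies, hij]
  simp only [mulVec, dotProduct, Fintype.sum_prod_type, hentry, add_mul, ite_mul, zero_mul,
    Finset.sum_add_distrib, Finset.sum_ite_irrel, Finset.sum_const_zero, Finset.sum_ite_eq,
    Finset.mem_univ, if_true, sub_mul, Finset.sum_sub_distrib, Finset.mul_sum]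
  ring

theorem truncDistMatrix_gJoin_top_gUnion_top_mulVec [Fintype α] [Fintype β] [Fintype γ]
    (u : α ⊕ (β ⊕ γ) → ℚ) :
    truncDistMatrix
        (gJoin (⊤ : SimpleGraph α) (gUnion (⊤ : SimpleGraph β) (⊤ : SimpleGraph γ))) *ᵥ u =
      Sum.elim (fun a => ∑ x, u x - u (inl a))
        (Sum.elim (fun b => ∑ x, u x - u (inr (inl b)) + ∑ c, u (inr (inr c)))
          (fun c => ∑ x, u x - u (inr (inr c)) + ∑ b, u (inr (inl b)))) := by
  rw [truncDistMatrix_gJoin, truncDistMatrix_gUnion, fromBlocks_mulVec, fromBlocks_mulVec]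
  ext (a | b | c) <;>
    simp only [of_const_mulVec, truncDistMatrix_top_mulVec, Fintype.sum_sum_type,
      Function.comp_apply, Pi.add_apply, elim_inl, elim_inr, one_mul] <;> ring

theorem distMatrix_gJoin_top_copies_mulVec_inl [Fintype α] [Nonempty α] [Fintype β] {k : ℕ}
    (H : SimpleGraph β) (v : α ⊕ (Fin k × β) → ℚ) (a : α) :
    (distMatrix (gJoin (⊤ : SimpleGraph α) (copies k H)) *ᵥ v) (inl a) =
      ∑ b, v (inl b) - v (inl a) + ∑ p, v (inr p) := by
  rw [distMatrix_gJoin_top, truncDistMatrix_gJoin, fromBlocks_mulVec]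
  simp [truncDistMatrix_top_mulVec, of_const_mulVec]

theorem distMatrix_gJoin_top_copies_mulVec_inr [Fintype α] [Nonempty α] [Fintype β] {k : ℕ}
    (H : SimpleGraph β) (v : α ⊕ (Fin k × β) → ℚ) (i : Fin k) (x : β) :
    (distMatrix (gJoin (⊤ : SimpleGraph α) (copies k H)) *ᵥ v) (inr (i, x)) =
      ∑ b, v (inl b) + 2 * ∑ p, v (inr p) - 2 * ∑ y, v (inr (i, y)) +
        (truncDistMatrix H *ᵥ fun y => v (inr (i, y))) x := by
  rw [distMatrix_gJoin_top, truncDistMatrix_gJoin, fromBlocks_mulVec]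
  simp only [of_const_mulVec, truncDistMatrix_copies_mulVec, Function.comp_apply, Pi.add_apply,
    elim_inr, one_mul]
  ring

def copiesKernelMap (k : ℕ) (g : β → ℚ) : (Fin k → ℚ) →ₗ[ℚ] (Fin 2 ⊕ (Fin k × β) → ℚ) where
  toFun σ := Sum.elim (fun _ => -∑ i, σ i) (fun p => σ p.1 * g p.2)
  map_add' σ τ := by ext (_ | _) <;> simp [Finset.sum_add_distrib, add_mul, add_comm]
  map_smul' c σ := by ext (_ | _) <;> simp [Finset.mul_sum, mul_assoc]

section KernelOfDistMatrix

variable {k : ℕ} {g : β → ℚ}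

theorem copiesKernelMap_inl (σ : Fin k → ℚ) (a : Fin 2) :
    copiesKernelMap k g σ (inl a) = -∑ i, σ i := rfl

theorem copiesKernelMap_injective (hg : g ≠ 0) : Function.Injective (copiesKernelMap k g) := by
  obtain ⟨x, hx⟩ := Function.ne_iff.1 hg
  intro σ τ h
  funext i
  exact (mul_left_inj' hx).1 (congrFun h (inr (i, x)))

variable [Fintype β] {H : SimpleGraph β}

theorem sum_copiesKernelMap_inr (σ : Fin k → ℚ) :
    ∑ p, copiesKernelMap k g σ (inr p) = (∑ i, σ i) * ∑ x, g x := by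
  rw [Fintype.sum_prod_type, Finset.sum_mul_sum]
  rfl

theorem distMatrix_mulVec_copiesKernelMap (hg : truncDistMatrix H *ᵥ g = fun _ => 2)
    (hsum : ∑ x, g x = 1) (σ : Fin k → ℚ) :
    distMatrix (gJoin (⊤ : SimpleGraph (Fin 2)) (copies k H)) *ᵥ copiesKernelMap k g σ = 0 := by
  have hcopy : ∀ i, (fun y => copiesKernelMap k g σ (inr (i, y))) = σ i • g := fun _ => rfl
  ext (a | ⟨i, x⟩)
  · rw [distMatrix_gJoin_top_copies_mulVec_inl, sum_copiesKernelMap_inr, hsum, Fin.sum_univ_two]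
    simp only [copiesKernelMap_inl, Pi.zero_apply]
    ring
  · rw [distMatrix_gJoin_top_copies_mulVec_inr, hcopy, mulVec_smul, hg, sum_copiesKernelMap_inr,
      hsum, Fin.sum_univ_two]
    simp only [copiesKernelMap_inl, Pi.smul_apply, smul_eq_mul, ← Finset.mul_sum, hsum,
      Pi.zero_apply]
    ring

theorem eq_copiesKernelMap_of_distMatrix_mulVec_eq_zero
    (hinj : Function.Injective (truncDistMatrix H).mulVec)
    (hg : truncDistMatrix H *ᵥ g = fun _ => 2) {v : Fin 2 ⊕ (Fin k × β) → ℚ}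
    (hv : distMatrix (gJoin (⊤ : SimpleGraph (Fin 2)) (copies k H)) *ᵥ v = 0) :
    v = copiesKernelMap k g fun i => ∑ y, v (inr (i, y)) := by
  have hhub : ∀ a, v (inl a) = -∑ p, v (inr p) := by
    have h := fun a => congrFun hv (inl a)
    simp only [distMatrix_gJoin_top_copies_mulVec_inl, Fin.sum_univ_two, Pi.zero_apply] at h
    exact Fin.forall_fin_two.2 ⟨by linarith [h 1], by linarith [h 0]⟩
  have hcopy : ∀ i, (fun y => v (inr (i, y))) = (∑ y, v (inr (i, y))) • g := by
    intro i
    apply hinj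
    ext x
    have h := congrFun hv (inr (i, x))
    rw [distMatrix_gJoin_top_copies_mulVec_inr, Fin.sum_univ_two, hhub 0, hhub 1] at h
    simp only [mulVec_smul, hg, Pi.smul_apply, smul_eq_mul, Pi.zero_apply] at h ⊢
    linarith
  ext (a | ⟨i, x⟩)
  · rw [hhub a, copiesKernelMap_inl, Fintype.sum_prod_type]
  · exact congrFun (hcopy i) x

theorem ker_distMatrix_mulVecLin_eq_range
    (hinj : Function.Injective (truncDistMatrix H).mulVec)
    (hg : truncDistMatrix H *ᵥ g = fun _ => 2) (hsum : ∑ x, g x = 1) :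
    LinearMap.ker (distMatrix (gJoin (⊤ : SimpleGraph (Fin 2)) (copies k H))).mulVecLin =
      LinearMap.range (copiesKernelMap k g) := by
  ext v
  constructor
  · intro hv
    exact ⟨_, (eq_copiesKernelMap_of_distMatrix_mulVec_eq_zero hinj hg hv).symm⟩
  · rintro ⟨σ, rfl⟩
    exact distMatrix_mulVec_copiesKernelMap hg hsum σ

theorem finrank_ker_distMatrix_mulVecLin
    (hinj : Function.Injective (truncDistMatrix H).mulVec)
    (hg : truncDistMatrix H *ᵥ g = fun _ => 2) (hsum : ∑ x, g x = 1) :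
    Module.finrank ℚ
        (LinearMap.ker (distMatrix (gJoin (⊤ : SimpleGraph (Fin 2)) (copies k H))).mulVecLin) =
      k := by
  have hg0 : g ≠ 0 := by
    rintro rfl
    simp at hsum
  rw [ker_distMatrix_mulVecLin_eq_range hinj hg hsum,
    LinearMap.finrank_range_of_inj (copiesKernelMap_injective hg0), Module.finrank_fin_fun]

end KernelOfDistMatrix

theorem Matrix.card_sub_rank_eq_finrank_ker {K m n : Type*} [Field K] [Fintype n]
    (A : Matrix m n K) :
    Fintype.card n - A.rank = Module.finrank K (LinearMap.ker A.mulVecLin) := by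
  rw [rank, ← Module.finrank_fintype_fun_eq_card K, ← A.mulVecLin.finrank_range_add_finrank_ker]
  omega

theorem truncDistMatrix_Hgraph_mulVec_injective :
    Function.Injective (truncDistMatrix Hgraph).mulVec := by
  rw [← coe_mulVecLin, injective_iff_map_eq_zero]
  intro u hu
  rw [mulVecLin_apply, Hgraph, truncDistMatrix_gJoin_top_gUnion_top_mulVec] at hu
  set S := ∑ x, u x
  set A := ∑ a, u (inl a)
  set B := ∑ b, u (inr (inl b))
  set C := ∑ c, u (inr (inr c))
  simp only [funext_iff, Sum.forall, Sum.elim_inl, Sum.elim_inr, Pi.zero_apply] at hu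
  obtain ⟨hua, hub, huc⟩ := hu
  have ha : ∀ a, u (inl a) = S := fun a => by linarith [hua a]
  have hb : ∀ b, u (inr (inl b)) = S + C := fun b => by linarith [hub b]
  have hc : ∀ c, u (inr (inr c)) = S + B := fun c => by linarith [huc c]
  have hS : S = A + B + C := by simp [S, A, B, C, Fintype.sum_sum_type, add_assoc]
  have hA : A = 3 * S := by simp [A, ha]
  have hB : B = 2 * (S + C) := by simp only [B, hb, Fin.sum_univ_two]; ring
  have hC : C = 2 * (S + B) := by simp only [C, hc, Fin.sum_univ_two]; ring
  have hS0 : S = 0 := by linarith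
  have hC0 : C = 0 := by linarith
  have hB0 : B = 0 := by linarith
  ext (a | b | c) <;> simp [ha, hb, hc, hS0, hB0, hC0]

def hgraphWeight : Fin 3 ⊕ (Fin 2 ⊕ Fin 2) → ℚ :=
  Sum.elim (fun _ => -1) (fun _ => 1)

theorem truncDistMatrix_Hgraph_mulVec_hgraphWeight :
    truncDistMatrix Hgraph *ᵥ hgraphWeight = fun _ => 2 := by
  rw [Hgraph, truncDistMatrix_gJoin_top_gUnion_top_mulVec]
  ext (a | b | c) <;> norm_num [hgraphWeight, Fintype.sum_sum_type]

theorem sum_hgraphWeight : ∑ x, hgraphWeight x = 1 := by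
  norm_num [hgraphWeight, Fintype.sum_sum_type]

theorem join_copies_nullity_general (k : ℕ) :
    (gJoin (⊤ : SimpleGraph (Fin 2)) (copies k Hgraph)).Connected ∧
    (¬ Nonempty (pathGraph 4 ↪g gJoin (⊤ : SimpleGraph (Fin 2)) (copies k Hgraph))) ∧
    (¬ Nonempty (cycleGraph 4 ↪g gJoin (⊤ : SimpleGraph (Fin 2)) (copies k Hgraph))) ∧
    Fintype.card (Fin 2 ⊕ (Fin k × (Fin 3 ⊕ (Fin 2 ⊕ Fin 2)))) = 7 * k + 2 ∧
    Fintype.card (Fin 2 ⊕ (Fin k × (Fin 3 ⊕ (Fin 2 ⊕ Fin 2)))) -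
      (distMatrix (gJoin (⊤ : SimpleGraph (Fin 2)) (copies k Hgraph))).rank = k := by
  have hfree := not_hasInducedP4OrC4_gJoin_top_copies_Hgraph k
  refine ⟨gJoin_top_connected _,
    fun ⟨f⟩ => hfree (pathGraph_four_hasInducedP4OrC4.map f),
    fun ⟨f⟩ => hfree (cycleGraph_four_hasInducedP4OrC4.map f), ?_, ?_⟩
  · simp only [Fintype.card_sum, Fintype.card_prod, Fintype.card_fin]
    ring
  · rw [card_sub_rank_eq_finrank_ker]
    exact finrank_ker_distMatrix_mulVecLin truncDistMatrix_Hgraph_mulVec_injective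
      truncDistMatrix_Hgraph_mulVec_hgraphWeight sum_hgraphWeight

/-- For every integer k ≥ 2, the connected trivially perfect graph
G = K₂ ∨ (H + H + ⋯ + H) (join of K₂ with k disjoint copies of H = K₃ ∨ (K₂ + K₂))
has 7k + 2 vertices and its distance matrix has nullity exactly k. -/
theorem join_copies_nullity (k : ℕ) (hk : 2 ≤ k) :
    (gJoin (⊤ : SimpleGraph (Fin 2)) (copies k Hgraph)).Connected ∧
    (¬ Nonempty (pathGraph 4 ↪g gJoin (⊤ : SimpleGraph (Fin 2)) (copies k Hgraph))) ∧
    (¬ Nonempty (cycleGraph 4 ↪g gJoin (⊤ : SimpleGraph (Fin 2)) (copies k Hgraph))) ∧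
    Fintype.card (Fin 2 ⊕ (Fin k × (Fin 3 ⊕ (Fin 2 ⊕ Fin 2)))) = 7 * k + 2 ∧
    Fintype.card (Fin 2 ⊕ (Fin k × (Fin 3 ⊕ (Fin 2 ⊕ Fin 2)))) -
      (distMatrix (gJoin (⊤ : SimpleGraph (Fin 2)) (copies k Hgraph))).rank = k :=
  join_copies_nullity_general k
end
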